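/- arXiv:0910.0652 — 10 statements merged into one kernel-verified Lean document; each statement's English description precedes it below -/
import Mathlib

section
/- Let x0 < 0 and let g(x) = (9x(2x0 − x)/4)^{1/3} for x ∈ [2x0, 0] be the normal Tricomi curve. Then: (i) g(2x0) = g(0) = 0 and g(x) > 0 for all x ∈ (2x0, 0); (ii) the one-sided difference quotients satisfy lim_{t→0+} g(2x0 + t)/t = +∞ and lim_{t→0−} g(t)/t = −∞; (iii) g is twice continuously differentiable on (2x0, 0); (iv) g''(x) ≤ −K0 for all x ∈ (2x0, 0), where K0 = (3 x0^4 / 2)^{−1/3}, and moreover g''(x0) = −K0. -/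
/-!
Write `g = u ^ (1/3)` with the concave quadratic `u x = 9x(2x₀ - x)/4 = 9/4 (x₀² - (x - x₀)²)`,
which is positive on `(2x₀, 0)` and vanishes linearly at both ends; so `g` is smooth inside and
`|g(t)/t| ≍ |t| ^ (-2/3)` blows up at the endpoints. The chain rule gives
`g'' = p(p-1) u^(p-2) u'² + p u^(p-1) u''` with `p = 1/3`, `u'' = -9/2`: the first term is
nonpositive and vanishes at `x₀`, while the second is `-(3/2) u^(-2/3)`, maximal at the vertex
`x₀` of `u`, where it equals `-K₀`.
-/

open Set Filter Topology

theorem deriv_deriv_rpow_const_comp {u u' : ℝ → ℝ} {u'' x : ℝ}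
    (hu : ∀ᶠ y in 𝓝 x, HasDerivAt u (u' y) y) (hu' : HasDerivAt u' u'' x) (hx : u x ≠ 0)
    (p : ℝ) :
    deriv (deriv fun y => u y ^ p) x
      = p * (p - 1) * u x ^ (p - 2) * u' x ^ 2 + p * u x ^ (p - 1) * u'' := by
  have hne : ∀ᶠ y in 𝓝 x, u y ≠ 0 := hu.self_of_nhds.continuousAt.eventually_ne hx
  have hderiv : deriv (fun y => u y ^ p) =ᶠ[𝓝 x] fun y => p * u y ^ (p - 1) * u' y := by
    filter_upwards [hu, hne] with y hy hy0
    rw [(hy.rpow_const (Or.inl hy0)).deriv]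
    ring
  have hfactor : HasDerivAt (fun y => p * u y ^ (p - 1) * u' y) _ x :=
    ((hu.self_of_nhds.rpow_const (p := p - 1) (Or.inl hx)).const_mul p).mul hu'
  rw [hderiv.deriv_eq, hfactor.deriv, show p - 1 - 1 = p - 2 by ring]
  ring

theorem tendsto_rpow_div_self_nhdsGT_zero {p : ℝ} (hp : p < 1) :
    Tendsto (fun s : ℝ => s ^ p / s) (𝓝[>] 0) atTop := by
  refine (tendsto_rpow_neg_nhdsGT_zero (sub_neg.2 hp)).congr' ?_
  filter_upwards [self_mem_nhdsWithin] with s hs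
  exact Real.rpow_sub_one (ne_of_gt hs) p

namespace TricomiCurve

noncomputable def radicand (x0 x : ℝ) : ℝ := 9 * x * (2 * x0 - x) / 4

noncomputable def curve (x0 x : ℝ) : ℝ := radicand x0 x ^ ((1 : ℝ) / 3)

variable {x0 : ℝ}

theorem radicand_eq_sub_sq (x : ℝ) : radicand x0 x = 9 / 4 * (x0 ^ 2 - (x - x0) ^ 2) := by
  unfold radicand; ring

theorem radicand_two_mul_add (t : ℝ) : radicand x0 (2 * x0 + t) = radicand x0 (-t) := by
  unfold radicand; ring

theorem radicand_le_radicand_self (x : ℝ) : radicand x0 x ≤ radicand x0 x0 := by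
  rw [radicand_eq_sub_sq, radicand_eq_sub_sq]; nlinarith [sq_nonneg (x - x0)]

theorem radicand_pos {x : ℝ} (hx : x ∈ Ioo (2 * x0) 0) : 0 < radicand x0 x := by
  obtain ⟨h1, h2⟩ := hx
  unfold radicand; nlinarith

theorem hasDerivAt_radicand (x : ℝ) : HasDerivAt (radicand x0) (9 / 2 * (x0 - x)) x := by
  have h : HasDerivAt (fun x => 9 * x * (2 * x0 - x) / 4)
      ((9 * 1 * (2 * x0 - x) + 9 * x * (0 - 1)) / 4) x :=
    (((hasDerivAt_id' x).const_mul 9).mul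
      ((hasDerivAt_const x _).sub (hasDerivAt_id' x))).div_const 4
  exact h.congr_deriv (by ring)

theorem hasDerivAt_deriv_radicand (x : ℝ) :
    HasDerivAt (fun y => 9 / 2 * (x0 - y)) (-(9 / 2)) x := by
  simpa using ((hasDerivAt_const x x0).sub (hasDerivAt_id x)).const_mul (9 / 2 : ℝ)

theorem contDiffOn_curve : ContDiffOn ℝ 2 (curve x0) (Ioo (2 * x0) 0) := by
  have hu : ContDiff ℝ 2 (radicand x0) := by unfold radicand; fun_prop
  exact fun x hx =>
    ((Real.contDiffAt_rpow_const_of_ne (radicand_pos hx).ne').comp x hu.contDiffAt).contDiffWithinAt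

theorem deriv_deriv_curve {x : ℝ} (hx : radicand x0 x ≠ 0) :
    deriv (deriv (curve x0)) x
      = 1 / 3 * (1 / 3 - 1) * radicand x0 x ^ ((1 : ℝ) / 3 - 2) * (9 / 2 * (x0 - x)) ^ 2
        + 1 / 3 * radicand x0 x ^ ((1 : ℝ) / 3 - 1) * -(9 / 2) :=
  deriv_deriv_rpow_const_comp (Eventually.of_forall hasDerivAt_radicand)
    (hasDerivAt_deriv_radicand x) hx _

theorem deriv_deriv_curve_le {x : ℝ} (hx : x ∈ Ioo (2 * x0) 0) :
    deriv (deriv (curve x0)) x ≤ -(3 / 2) * radicand x0 x0 ^ ((1 : ℝ) / 3 - 1) := by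
  have hu := radicand_pos hx
  have hmono : radicand x0 x0 ^ ((1 : ℝ) / 3 - 1) ≤ radicand x0 x ^ ((1 : ℝ) / 3 - 1) :=
    Real.rpow_le_rpow_of_nonpos hu (radicand_le_radicand_self x) (by norm_num)
  have hslope : 0 ≤ radicand x0 x ^ ((1 : ℝ) / 3 - 2) * (9 / 2 * (x0 - x)) ^ 2 := by positivity
  rw [deriv_deriv_curve hu.ne']
  nlinarith

theorem deriv_deriv_curve_self (hx0 : x0 < 0) :
    deriv (deriv (curve x0)) x0 = -(3 / 2) * radicand x0 x0 ^ ((1 : ℝ) / 3 - 1) := by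
  rw [deriv_deriv_curve (radicand_pos ⟨by linarith, hx0⟩).ne']
  ring

theorem rpow_neg_third_eq_radicand_self (hx0 : x0 < 0) :
    (3 * x0 ^ 4 / 2) ^ (-(1 : ℝ) / 3) = 3 / 2 * radicand x0 x0 ^ ((1 : ℝ) / 3 - 1) := by
  have hc : 0 < radicand x0 x0 := radicand_pos ⟨by linarith, hx0⟩
  have hsplit : 3 * x0 ^ 4 / 2 = (2 / 3 : ℝ) ^ 3 * radicand x0 x0 ^ 2 := by
    unfold radicand; ring
  rw [hsplit, Real.mul_rpow (by positivity) (by positivity),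
    ← Real.rpow_natCast_mul (by norm_num), ← Real.rpow_natCast_mul hc.le]
  norm_num

theorem tendsto_curve_neg_div (hx0 : x0 < 0) :
    Tendsto (fun s => curve x0 (-s) / s) (𝓝[>] 0) atTop := by
  have hm : 0 < 9 / 4 * -x0 := by linarith
  refine tendsto_atTop_mono' _ ?_ ((tendsto_rpow_div_self_nhdsGT_zero (p := 1 / 3)
    (by norm_num)).const_mul_atTop (Real.rpow_pos_of_pos hm (1 / 3)))
  filter_upwards [Ioo_mem_nhdsGT (show (0 : ℝ) < -x0 by linarith)] with s ⟨hs0, hs1⟩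
  have hlinear : 9 / 4 * -x0 * s ≤ radicand x0 (-s) := by
    unfold radicand; nlinarith
  calc (9 / 4 * -x0) ^ ((1 : ℝ) / 3) * (s ^ ((1 : ℝ) / 3) / s)
      = (9 / 4 * -x0 * s) ^ ((1 : ℝ) / 3) / s := by
        rw [Real.mul_rpow hm.le hs0.le, mul_div_assoc]
    _ ≤ curve x0 (-s) / s :=
        div_le_div_of_nonneg_right (Real.rpow_le_rpow (by positivity) hlinear (by norm_num))
          hs0.le

end TricomiCurve

open TricomiCurve

/-- Properties (g1)-(g4) of the normal Tricomi curve
`g(x) = (9x(2x0 - x)/4)^(1/3)` on `[2x0, 0]`, for `x0 < 0`, with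
`K0 = (3 x0^4 / 2)^(-1/3)`. -/
theorem normal_tricomi_curve_properties
    (x0 : ℝ) (hx0 : x0 < 0)
    (g : ℝ → ℝ)
    (hg : ∀ x : ℝ, g x = (9 * x * (2 * x0 - x) / 4) ^ ((1 : ℝ) / 3))
    (K0 : ℝ) (hK0 : K0 = (3 * x0 ^ 4 / 2) ^ (-(1 : ℝ) / 3)) :
    -- (i)
    (g (2 * x0) = 0 ∧ g 0 = 0 ∧ ∀ x ∈ Ioo (2 * x0) 0, 0 < g x) ∧
    -- (ii)
    (Tendsto (fun t : ℝ => g (2 * x0 + t) / t) (nhdsWithin 0 (Ioi 0)) atTop ∧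
      Tendsto (fun t : ℝ => g t / t) (nhdsWithin 0 (Iio 0)) atBot) ∧
    -- (iii)
    ContDiffOn ℝ 2 g (Ioo (2 * x0) 0) ∧
    -- (iv)
    ((∀ x ∈ Ioo (2 * x0) 0, deriv (deriv g) x ≤ -K0) ∧
      deriv (deriv g) x0 = -K0) := by
  obtain rfl : g = curve x0 := funext hg
  rw [rpow_neg_third_eq_radicand_self hx0] at hK0
  subst hK0
  refine ⟨⟨?_, ?_, fun x hx => Real.rpow_pos_of_pos (radicand_pos hx) _⟩, ⟨?_, ?_⟩,
    contDiffOn_curve, fun x hx => (deriv_deriv_curve_le hx).trans_eq (by ring),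
    (deriv_deriv_curve_self hx0).trans (by ring)⟩
  · simp [curve, radicand]
  · simp [curve, radicand]
  · simpa only [curve, radicand_two_mul_add] using tendsto_curve_neg_div hx0
  · have hneg : Tendsto (fun t : ℝ => -t) (𝓝[<] 0) (𝓝[>] 0) := by
      simpa using tendsto_neg_nhdsLT_neg (a := (0 : ℝ))
    simpa [Function.comp_def, div_neg] using
      tendsto_neg_atTop_atBot.comp ((tendsto_curve_neg_div hx0).comp hneg)
end

section
/- Let x0 < 0, g(x) = (9x(2x0 − x)/4)^{1/3} and h(x) = ((x − x0)^2 + (4/9) g(x)^4)^{1/2} for x ∈ [2x0, 0]. Then for every x ∈ (2x0, 0): g'(x) = −(3/2)(x − x0)/g(x)^2, and the unit normal identity (−g'(x), 1)/((g'(x))^2 + 1)^{1/2} = (1/h(x)) · (x − x0, (2/3) g(x)^2) holds; moreover the right-hand side extends continuously to [2x0, 0] with value (−1, 0) at x = 2x0 and (1, 0) at x = 0. -/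
/-!
With `Q(x) = 9x(2x0 - x)/4` we have `g = Q^{1/3}`, so `3 g² g' = Q' = -(9/2)(x - x0)`, which is the
derivative formula. It says `g' = -a/b` for `(a, b) = (x - x0, (2/3) g²)`, so `(-g', 1)` is a positive
multiple of `(a, b)`, whose length is `h`. The vector `(a, b)` never vanishes (`g(x0) > 0`), so `N` is
continuous, and at the endpoints `g = 0`, where `N = ((x - x0)/|x - x0|, 0)`.
-/

open Set

theorem HasDerivAt.rpow_one_third {f : ℝ → ℝ} {f' x : ℝ} (hf : HasDerivAt f f' x)
    (hx : 0 < f x) :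
    HasDerivAt (fun y => f y ^ ((1 : ℝ) / 3)) (f' / (3 * (f x ^ ((1 : ℝ) / 3)) ^ 2)) x := by
  convert hf.rpow_const (p := 1 / 3) (Or.inl hx.ne') using 1
  have hsq : (f x ^ ((1 : ℝ) / 3)) ^ 2 = f x ^ ((2 : ℝ) / 3) := by
    rw [← Real.rpow_natCast, ← Real.rpow_mul hx.le]
    norm_num
  rw [hsq, show (1 : ℝ) / 3 - 1 = -(2 / 3) by norm_num, Real.rpow_neg hx.le]
  field_simp

theorem unit_normal_of_slope_eq {a b d : ℝ} (hb : 0 < b) (hd : d * b = -a) :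
    (-d / √(d ^ 2 + 1), 1 / √(d ^ 2 + 1)) = (a / √(a ^ 2 + b ^ 2), b / √(a ^ 2 + b ^ 2)) := by
  have hd : d = -a / b := by field_simp; linarith
  have hnorm : √(d ^ 2 + 1) = √(a ^ 2 + b ^ 2) / b := by
    rw [Real.sqrt_eq_iff_mul_self_eq_of_pos (by positivity), div_mul_div_comm,
      Real.mul_self_sqrt (by positivity), hd]
    field_simp
  have hpos : 0 < √(a ^ 2 + b ^ 2) := by positivity
  rw [hnorm, hd]
  ext <;> field_simp

noncomputable def tricomiCurve (x0 x : ℝ) : ℝ := (9 * x * (2 * x0 - x) / 4) ^ ((1 : ℝ) / 3)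

section TricomiCurve

variable {x0 x : ℝ}

theorem tricomiRadicand_pos (hx : x ∈ Ioo (2 * x0) 0) : 0 < 9 * x * (2 * x0 - x) / 4 := by
  obtain ⟨hleft, hright⟩ := hx
  nlinarith

theorem tricomiCurve_pos (hx : x ∈ Ioo (2 * x0) 0) : 0 < tricomiCurve x0 x :=
  Real.rpow_pos_of_pos (tricomiRadicand_pos hx) _

theorem tricomiCurve_two_mul : tricomiCurve x0 (2 * x0) = 0 := by
  simp [tricomiCurve]

theorem tricomiCurve_zero : tricomiCurve x0 0 = 0 := by
  simp [tricomiCurve]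

theorem continuous_tricomiCurve : Continuous (tricomiCurve x0) := by
  unfold tricomiCurve
  fun_prop (disch := norm_num)

theorem hasDerivAt_tricomiCurve (hx : x ∈ Ioo (2 * x0) 0) :
    HasDerivAt (tricomiCurve x0) (-(3 / 2) * (x - x0) / tricomiCurve x0 x ^ 2) x := by
  have hQ : HasDerivAt (fun y : ℝ => 9 * y * (2 * x0 - y) / 4) (9 * (2 * x0 - 2 * x) / 4) x := by
    refine ((((hasDerivAt_id' x).const_mul 9).fun_mul
      ((hasDerivAt_id' x).const_sub (2 * x0))).div_const 4).congr_deriv ?_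
    ring
  have hg := hQ.rpow_one_third (tricomiRadicand_pos hx)
  have hpos := tricomiCurve_pos hx
  unfold tricomiCurve at hpos ⊢
  convert hg using 1
  field_simp
  ring

theorem sq_add_sq_tricomiCurve_pos (hx0 : x0 < 0) (x : ℝ) :
    0 < (x - x0) ^ 2 + ((2 / 3) * tricomiCurve x0 x ^ 2) ^ 2 := by
  rcases eq_or_ne x x0 with rfl | hne
  · have := tricomiCurve_pos (x0 := x) ⟨by linarith, hx0⟩
    positivity
  · have := sub_ne_zero.mpr hne
    positivity

end TricomiCurve

/-- The derivative formula for the normal Tricomi curve and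
the unit outer normal identity along the elliptic arc `σ`, together with
its continuous extension to the endpoints. -/
theorem normal_tricomi_unit_normal
    (x0 : ℝ) (hx0 : x0 < 0)
    (g h : ℝ → ℝ)
    (hg : ∀ x : ℝ, g x = (9 * x * (2 * x0 - x) / 4) ^ ((1 : ℝ) / 3))
    (hh : ∀ x : ℝ, h x = ((x - x0) ^ 2 + (4 / 9) * (g x) ^ 4) ^ ((1 : ℝ) / 2))
    (N : ℝ → ℝ × ℝ)
    (hN : ∀ x : ℝ, N x = ((x - x0) / h x, (2 / 3) * (g x) ^ 2 / h x)) :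
    (∀ x ∈ Ioo (2 * x0) 0,
      deriv g x = -(3 / 2) * (x - x0) / (g x) ^ 2 ∧
      (-(deriv g x) / ((deriv g x) ^ 2 + 1) ^ ((1 : ℝ) / 2),
        1 / ((deriv g x) ^ 2 + 1) ^ ((1 : ℝ) / 2)) = N x) ∧
    ContinuousOn N (Icc (2 * x0) 0) ∧
    N (2 * x0) = (-1, 0) ∧ N 0 = (1, 0) := by
  obtain rfl : g = tricomiCurve x0 := funext hg
  have hh : ∀ x, h x = √((x - x0) ^ 2 + ((2 / 3) * tricomiCurve x0 x ^ 2) ^ 2) := fun x => by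
    rw [hh, Real.sqrt_eq_rpow]
    ring_nf
  have hh_ne : ∀ x, h x ≠ 0 := fun x => by
    rw [hh]
    exact (Real.sqrt_pos.2 (sq_add_sq_tricomiCurve_pos hx0 x)).ne'
  have hh_endpoint : ∀ x, tricomiCurve x0 x = 0 → h x = |x - x0| := fun x hx => by
    rw [hh, hx]
    simpa using Real.sqrt_sq_eq_abs (x - x0)
  have hg_cont := continuous_tricomiCurve (x0 := x0)
  refine ⟨fun x hx => ?_, ?_, ?_, ?_⟩
  · have hd := (hasDerivAt_tricomiCurve hx).deriv
    have hpos := tricomiCurve_pos hx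
    refine ⟨hd, ?_⟩
    rw [← Real.sqrt_eq_rpow, hN, hh, hd]
    exact unit_normal_of_slope_eq (by positivity) (by field_simp)
  · have hh_cont : Continuous h := by
      simp only [funext hh]
      fun_prop
    rw [funext hN]
    exact Continuous.continuousOn (by fun_prop (disch := exact hh_ne))
  · rw [hN, hh_endpoint _ tricomiCurve_two_mul, tricomiCurve_two_mul, two_mul,
      add_sub_cancel_right, abs_of_neg hx0]
    ext <;> simp [hx0.ne]
  · rw [hN, hh_endpoint _ tricomiCurve_zero, tricomiCurve_zero, zero_sub, abs_neg,
      abs_of_neg hx0]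
    ext <;> simp [hx0.ne]
end

section
/- Let x0 < 0 and y_C = −(3|x0|/2)^{2/3}. Then the boundary of the normal Tricomi domain is D-starlike with respect to the vector field D = −3x ∂x − 2y ∂y; explicitly: (i) for y ∈ [y_C, 0], with x = 2x0 + (2/3)(−y)^{3/2} and n_AC = (1 − y)^{−1/2}(−1, −(−y)^{1/2}), one has ⟨(−3x, −2y), n_AC⟩ = 6 x0 (1 − y)^{−1/2} < 0; (ii) for y ∈ [y_C, 0], with x = −(2/3)(−y)^{3/2} and n_BC = (1 − y)^{−1/2}(1, −(−y)^{1/2}), one has ⟨(−3x, −2y), n_BC⟩ = 0; (iii) for x ∈ [2x0, 0], with y = g(x) and n_σ = (1/h(x)) (x − x0, (2/3) g(x)^2), one has ⟨(−3x, −2y), n_σ⟩ = −3 x x0 / h(x) ≤ 0. -/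
/-!
`D` generates the dilations `(x, y) ↦ (λ³x, λ²y)`. The characteristic `BC` is invariant under
them, so `D` is tangent to it and the pairing vanishes. `AC` is the mirror image of `BC`, again
dilation-invariant, translated by `2x0`; only the translation contributes, giving `6x0` times
the normalization. Both become polynomial identities once `(-y)^(3/2) = (-y) · (-y)^(1/2)`.
On the normal curve, `g³ = 9x(2x0 - x)/4` eliminates `g` and leaves `-3 x x0 / h`, which is
`≤ 0` because `x, x0 ≤ 0` and `h ≥ 0`.
-/

open Set

lemma Real.rpow_three_halves {t : ℝ} (ht : 0 ≤ t) :
    t ^ ((3 : ℝ) / 2) = t * t ^ ((1 : ℝ) / 2) := by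
  rw [show (3 : ℝ) / 2 = 1 + 1 / 2 by norm_num, Real.rpow_one_add' ht (by norm_num)]

lemma Real.rpow_one_third_pow_three {a : ℝ} (ha : 0 ≤ a) : (a ^ ((1 : ℝ) / 3)) ^ 3 = a := by
  simpa [one_div] using Real.rpow_inv_natCast_pow ha (n := 3) (by norm_num)

namespace NormalTricomi

lemma pairing_AC {x0 y : ℝ} (hy : y ≤ 0) (c : ℝ) :
    (-3 * (2 * x0 + (2 / 3) * (-y) ^ ((3 : ℝ) / 2))) * (-c) +
      (-2 * y) * (-(c * (-y) ^ ((1 : ℝ) / 2))) = 6 * x0 * c := by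
  rw [Real.rpow_three_halves (neg_nonneg.mpr hy)]
  ring

lemma pairing_BC {y : ℝ} (hy : y ≤ 0) (c : ℝ) :
    (-3 * (-(2 / 3) * (-y) ^ ((3 : ℝ) / 2))) * c +
      (-2 * y) * (-(c * (-y) ^ ((1 : ℝ) / 2))) = 0 := by
  rw [Real.rpow_three_halves (neg_nonneg.mpr hy)]
  ring

lemma pairing_curve {x x0 G : ℝ} (hG : G ^ 3 = 9 * x * (2 * x0 - x) / 4) (H : ℝ) :
    (-3 * x) * ((x - x0) / H) + (-2 * G) * ((2 / 3) * G ^ 2 / H) = -3 * x * x0 / H := by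
  have hnum : -3 * x * (x - x0) + (-2 * G) * ((2 / 3) * G ^ 2) = -3 * x * x0 := by
    linear_combination (-(4 : ℝ) / 3) * hG
  rw [← hnum]
  ring

lemma curve_radicand_nonneg {x0 x : ℝ} (hx : x ∈ Icc (2 * x0) 0) :
    0 ≤ 9 * x * (2 * x0 - x) / 4 := by
  nlinarith [hx.1, hx.2]

end NormalTricomi

open NormalTricomi in
theorem normal_tricomi_boundary_D_starlike_general
    (x0 : ℝ) (hx0 : x0 < 0)
    (yC : ℝ)
    (g h : ℝ → ℝ)
    (hg : ∀ x : ℝ, g x = (9 * x * (2 * x0 - x) / 4) ^ ((1 : ℝ) / 3))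
    (hh : ∀ x : ℝ, h x = ((x - x0) ^ 2 + (4 / 9) * (g x) ^ 4) ^ ((1 : ℝ) / 2)) :
    -- (i) along AC, with x = 2x0 + (2/3)(-y)^(3/2)
    (∀ y ∈ Icc yC 0,
      (-3 * (2 * x0 + (2 / 3) * (-y) ^ ((3 : ℝ) / 2))) * (-((1 - y) ^ (-(1 : ℝ) / 2))) +
        (-2 * y) * (-((1 - y) ^ (-(1 : ℝ) / 2) * (-y) ^ ((1 : ℝ) / 2)))
        = 6 * x0 * (1 - y) ^ (-(1 : ℝ) / 2) ∧
      6 * x0 * (1 - y) ^ (-(1 : ℝ) / 2) < 0) ∧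
    -- (ii) along BC, with x = -(2/3)(-y)^(3/2)
    (∀ y ∈ Icc yC 0,
      (-3 * (-(2 / 3) * (-y) ^ ((3 : ℝ) / 2))) * ((1 - y) ^ (-(1 : ℝ) / 2)) +
        (-2 * y) * (-((1 - y) ^ (-(1 : ℝ) / 2) * (-y) ^ ((1 : ℝ) / 2))) = 0) ∧
    -- (iii) along σ, with y = g x and n_σ = (1/h x) (x - x0, (2/3) g(x)^2)
    (∀ x ∈ Icc (2 * x0) 0,
      (-3 * x) * ((x - x0) / h x) + (-2 * g x) * ((2 / 3) * (g x) ^ 2 / h x)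
        = -3 * x * x0 / h x ∧
      -3 * x * x0 / h x ≤ 0) := by
  refine ⟨fun y hy => ⟨pairing_AC hy.2 _, ?_⟩, fun y hy => pairing_BC hy.2 _, fun x hx => ⟨?_, ?_⟩⟩
  · exact mul_neg_of_neg_of_pos (by linarith) (Real.rpow_pos_of_pos (by linarith [hy.2]) _)
  · refine pairing_curve ?_ _
    rw [hg x, Real.rpow_one_third_pow_three (curve_radicand_nonneg hx)]
  · have hh_nonneg : 0 ≤ h x := by
      rw [hh x]
      positivity
    exact div_nonpos_of_nonpos_of_nonneg (by nlinarith [hx.2]) hh_nonneg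

/-- The boundary of the normal Tricomi domain is `D`-starlike
with respect to `D = -3x ∂x - 2y ∂y`: explicit evaluation of the inner
products of `(-3x, -2y)` with the unit outer normals along `AC`, `BC`
and the normal Tricomi curve `σ`. -/
theorem normal_tricomi_boundary_D_starlike
    (x0 : ℝ) (hx0 : x0 < 0)
    (yC : ℝ) (hyC : yC = -(3 * |x0| / 2) ^ ((2 : ℝ) / 3))
    (g h : ℝ → ℝ)
    (hg : ∀ x : ℝ, g x = (9 * x * (2 * x0 - x) / 4) ^ ((1 : ℝ) / 3))
    (hh : ∀ x : ℝ, h x = ((x - x0) ^ 2 + (4 / 9) * (g x) ^ 4) ^ ((1 : ℝ) / 2)) :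
    -- (i) along AC, with x = 2x0 + (2/3)(-y)^(3/2)
    (∀ y ∈ Icc yC 0,
      (-3 * (2 * x0 + (2 / 3) * (-y) ^ ((3 : ℝ) / 2))) * (-((1 - y) ^ (-(1 : ℝ) / 2))) +
        (-2 * y) * (-((1 - y) ^ (-(1 : ℝ) / 2) * (-y) ^ ((1 : ℝ) / 2)))
        = 6 * x0 * (1 - y) ^ (-(1 : ℝ) / 2) ∧
      6 * x0 * (1 - y) ^ (-(1 : ℝ) / 2) < 0) ∧
    -- (ii) along BC, with x = -(2/3)(-y)^(3/2)
    (∀ y ∈ Icc yC 0,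
      (-3 * (-(2 / 3) * (-y) ^ ((3 : ℝ) / 2))) * ((1 - y) ^ (-(1 : ℝ) / 2)) +
        (-2 * y) * (-((1 - y) ^ (-(1 : ℝ) / 2) * (-y) ^ ((1 : ℝ) / 2))) = 0) ∧
    -- (iii) along σ, with y = g x and n_σ = (1/h x) (x - x0, (2/3) g(x)^2)
    (∀ x ∈ Icc (2 * x0) 0,
      (-3 * x) * ((x - x0) / h x) + (-2 * g x) * ((2 / 3) * (g x) ^ 2 / h x)
        = -3 * x * x0 / h x ∧
      -3 * x * x0 / h x ≤ 0) :=
  normal_tricomi_boundary_D_starlike_general x0 hx0 yC g h hg hh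
end

section
/- Let x0 < 0 and y_C = −(3|x0|/2)^{2/3}, and let K ⊂ ℝ² be the closed set K = {(x, y) : (y ≥ 0 and 9(x − x0)^2 + 4y^3 ≤ 9 x0^2) or (y_C ≤ y ≤ 0 and 2x0 + (2/3)(−y)^{3/2} ≤ x ≤ −(2/3)(−y)^{3/2})} (the closure of the normal Tricomi domain bounded by the two characteristics AC, BC and the normal Tricomi curve). Then K is invariant under the flow of the vector field D = −3x ∂x − 2y ∂y: for every (a, b) ∈ K and every t ≥ 0, the point (a e^{−3t}, b e^{−2t}) belongs to K; moreover (a e^{−3t}, b e^{−2t}) → (0, 0) as t → +∞. -/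
/-!
Writing `s = e^{-t} ∈ (0, 1]`, the flow is the quasi-homogeneous scaling `(x, y) ↦ (s³x, s²y)`.
Both pieces of `K` are cut out by inequalities between quasi-homogeneous terms: on the elliptic
piece `9x² + 4y³ ≤ 18 x₀ x` compares degree 6 with degree 3, and on the hyperbolic piece the
characteristics `x = -(2/3)(-y)^{3/2}` and `x = 2x₀ + (2/3)(-y)^{3/2}` are degree 3 in `(x, y)`
up to the constant `2x₀ ≤ 0`. Shrinking by `s ≤ 1` therefore preserves each inequality.
-/

open Set Filter Topology Real

def quasiScale (s : ℝ) (p : ℝ × ℝ) : ℝ × ℝ := (p.1 * s ^ 3, p.2 * s ^ 2)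

def tricomiEllipticPart (x0 : ℝ) : Set (ℝ × ℝ) :=
  {p | 0 ≤ p.2 ∧ 9 * (p.1 - x0) ^ 2 + 4 * p.2 ^ 3 ≤ 9 * x0 ^ 2}

def tricomiHyperbolicPart (x0 yC : ℝ) : Set (ℝ × ℝ) :=
  {p | yC ≤ p.2 ∧ p.2 ≤ 0 ∧
    2 * x0 + (2 / 3) * (-p.2) ^ ((3 : ℝ) / 2) ≤ p.1 ∧ p.1 ≤ -(2 / 3) * (-p.2) ^ ((3 : ℝ) / 2)}

theorem quasiScale_exp_neg (t : ℝ) (p : ℝ × ℝ) :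
    quasiScale (exp (-t)) p = (p.1 * exp (-3 * t), p.2 * exp (-2 * t)) := by
  simp only [quasiScale, ← exp_nat_mul]
  ring_nf

theorem tendsto_quasiScale_exp_neg (p : ℝ × ℝ) :
    Tendsto (fun t => quasiScale (exp (-t)) p) atTop (𝓝 (0, 0)) := by
  have hcont : Continuous (fun s => quasiScale s p) := by unfold quasiScale; fun_prop
  have h0 : quasiScale 0 p = (0, 0) := by simp [quasiScale]
  exact h0 ▸ (hcont.tendsto 0).comp tendsto_exp_neg_atTop_nhds_zero

theorem neg_mul_sq_rpow_three_halves {y : ℝ} (hy : y ≤ 0) {s : ℝ} (hs : 0 ≤ s) :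
    (-(y * s ^ 2)) ^ ((3 : ℝ) / 2) = (-y) ^ ((3 : ℝ) / 2) * s ^ 3 := by
  rw [neg_mul_eq_neg_mul, mul_rpow (neg_nonneg.2 hy) (sq_nonneg s), ← rpow_natCast,
    ← rpow_mul hs]
  norm_num

theorem mapsTo_quasiScale_tricomiEllipticPart (x0 : ℝ) {s : ℝ} (hs0 : 0 ≤ s) (hs1 : s ≤ 1) :
    MapsTo (quasiScale s) (tricomiEllipticPart x0) (tricomiEllipticPart x0) := by
  rintro ⟨x, y⟩ ⟨hy, hxy⟩
  set l := s ^ 3 with hl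
  have hl0 : 0 ≤ l := pow_nonneg hs0 3
  have hl1 : l ≤ 1 := pow_le_one₀ hs0 hs1
  have hquad : 9 * x ^ 2 + 4 * y ^ 3 ≤ 18 * x0 * x := by nlinarith
  have hpos : 0 ≤ 9 * x ^ 2 + 4 * y ^ 3 := by positivity
  refine ⟨mul_nonneg hy (sq_nonneg s), ?_⟩
  have hcube : (y * s ^ 2) ^ 3 = y ^ 3 * l ^ 2 := by rw [hl]; ring
  simp only [quasiScale, hcube, ← hl]
  nlinarith [mul_le_mul_of_nonneg_left hquad hl0, mul_le_mul_of_nonneg_left hl1 hpos]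

theorem mapsTo_quasiScale_tricomiHyperbolicPart {x0 : ℝ} (hx0 : x0 ≤ 0) (yC : ℝ) {s : ℝ}
    (hs0 : 0 ≤ s) (hs1 : s ≤ 1) :
    MapsTo (quasiScale s) (tricomiHyperbolicPart x0 yC) (tricomiHyperbolicPart x0 yC) := by
  rintro ⟨x, y⟩ ⟨hyC, hy, hleft, hright⟩
  have hs2 : s ^ 2 ≤ 1 := pow_le_one₀ hs0 hs1
  have hs3 : s ^ 3 ≤ 1 := pow_le_one₀ hs0 hs1
  have hs3' : 0 ≤ s ^ 3 := pow_nonneg hs0 3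
  dsimp only at hyC hy hleft hright
  simp only [tricomiHyperbolicPart, quasiScale, mem_ofPred_eq]
  rw [neg_mul_sq_rpow_three_halves hy hs0]
  refine ⟨?_, mul_nonpos_of_nonpos_of_nonneg hy (sq_nonneg s), ?_, ?_⟩
  · nlinarith [mul_le_mul_of_nonpos_left hs2 hy]
  · nlinarith [mul_le_mul_of_nonneg_right hleft hs3', mul_le_mul_of_nonpos_left hs3 hx0]
  · nlinarith [mul_le_mul_of_nonneg_right hright hs3']

theorem normal_tricomi_domain_D_star_shaped_general
    (x0 : ℝ) (hx0 : x0 < 0)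
    (yC : ℝ)
    (K : Set (ℝ × ℝ))
    (hK : K = {p : ℝ × ℝ |
      (0 ≤ p.2 ∧ 9 * (p.1 - x0) ^ 2 + 4 * p.2 ^ 3 ≤ 9 * x0 ^ 2) ∨
      (yC ≤ p.2 ∧ p.2 ≤ 0 ∧
        2 * x0 + (2 / 3) * (-p.2) ^ ((3 : ℝ) / 2) ≤ p.1 ∧
        p.1 ≤ -(2 / 3) * (-p.2) ^ ((3 : ℝ) / 2))}) :
    ∀ a b : ℝ, (a, b) ∈ K →
      (∀ t : ℝ, 0 ≤ t → (a * Real.exp (-3 * t), b * Real.exp (-2 * t)) ∈ K) ∧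
      Tendsto (fun t : ℝ => (a * Real.exp (-3 * t), b * Real.exp (-2 * t)))
        atTop (nhds ((0 : ℝ), (0 : ℝ))) := by
  have hK' : K = tricomiEllipticPart x0 ∪ tricomiHyperbolicPart x0 yC := hK
  intro a b hab
  refine ⟨fun t ht => ?_,
    by simpa only [quasiScale_exp_neg] using tendsto_quasiScale_exp_neg (a, b)⟩
  have hs0 : 0 ≤ exp (-t) := (exp_pos _).le
  have hs1 : exp (-t) ≤ 1 := exp_le_one_iff.2 (neg_nonpos.2 ht)
  rw [hK'] at hab ⊢
  simpa only [quasiScale_exp_neg] using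
    (mapsTo_quasiScale_tricomiEllipticPart x0 hs0 hs1).union_union
      (mapsTo_quasiScale_tricomiHyperbolicPart hx0.le yC hs0 hs1) hab

/-- The closed normal Tricomi domain is forward-invariant under
the flow `F_t(a,b) = (a e^{-3t}, b e^{-2t})` of `D = -3x ∂x - 2y ∂y`,
and every orbit tends to the origin: the domain is `D`-star-shaped. -/
theorem normal_tricomi_domain_D_star_shaped
    (x0 : ℝ) (hx0 : x0 < 0)
    (yC : ℝ) (hyC : yC = -(3 * |x0| / 2) ^ ((2 : ℝ) / 3))
    (K : Set (ℝ × ℝ))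
    (hK : K = {p : ℝ × ℝ |
      (0 ≤ p.2 ∧ 9 * (p.1 - x0) ^ 2 + 4 * p.2 ^ 3 ≤ 9 * x0 ^ 2) ∨
      (yC ≤ p.2 ∧ p.2 ≤ 0 ∧
        2 * x0 + (2 / 3) * (-p.2) ^ ((3 : ℝ) / 2) ≤ p.1 ∧
        p.1 ≤ -(2 / 3) * (-p.2) ^ ((3 : ℝ) / 2))}) :
    ∀ a b : ℝ, (a, b) ∈ K →
      (∀ t : ℝ, 0 ≤ t → (a * Real.exp (-3 * t), b * Real.exp (-2 * t)) ∈ K) ∧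
      Tendsto (fun t : ℝ => (a * Real.exp (-3 * t), b * Real.exp (-2 * t)))
        atTop (nhds ((0 : ℝ), (0 : ℝ))) :=
  normal_tricomi_domain_D_star_shaped_general x0 hx0 yC K hK
end

section
/- Let x0 < 0 and let (a, b) with a ∈ [2x0, 0], b ≥ 0 lie on the normal Tricomi curve, i.e. 9a^2 + 4b^3 = 18 a x0. Then for every t ≥ 0 the flowed point (a e^{−3t}, b e^{−2t}) lies inside the region bounded by the normal curve: 9(a e^{−3t} − x0)^2 + 4 (b e^{−2t})^3 ≤ 9 x0^2. Equivalently, 9a^2 − 18 a x0 e^{3t} + 4 b^3 ≤ 0 for every t ≥ 0. -/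
/-!
Write `u = e^{-3t} ∈ (0, 1]`, so that the flowed point is `(a u, b u^{2/3})` and its cube term is
`4 b^3 u^2`. On the curve `9 a^2 + 4 b^3 = 18 a x0`, hence
`9 (a u - x0)^2 + 4 b^3 u^2 - 9 x0^2 = -18 a x0 u (1 - u)`, which is `≤ 0` because
`18 a x0 = 9 a^2 + 4 b^3 ≥ 0`. The second inequality is the same identity with `s = e^{3t} ≥ 1`
in place of `1 / u`.
-/

open Real

theorem mul_nonneg_of_tricomi_curve {x0 a b : ℝ} (hb : 0 ≤ b)
    (hcurve : 9 * a ^ 2 + 4 * b ^ 3 = 18 * a * x0) : 0 ≤ a * x0 := by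
  nlinarith [sq_nonneg a, pow_nonneg hb 3]

theorem tricomi_scale_le {x0 a b u : ℝ} (hax : 0 ≤ a * x0)
    (hcurve : 9 * a ^ 2 + 4 * b ^ 3 = 18 * a * x0) (hu0 : 0 ≤ u) (hu1 : u ≤ 1) :
    9 * (a * u - x0) ^ 2 + 4 * (b ^ 3 * u ^ 2) ≤ 9 * x0 ^ 2 :=
  calc 9 * (a * u - x0) ^ 2 + 4 * (b ^ 3 * u ^ 2)
      = 9 * x0 ^ 2 - 18 * (a * x0) * u * (1 - u) := by linear_combination u ^ 2 * hcurve
    _ ≤ 9 * x0 ^ 2 :=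
      sub_le_self _ (mul_nonneg (mul_nonneg (by positivity) hu0) (sub_nonneg.2 hu1))

theorem tricomi_sub_mul_nonpos {x0 a b s : ℝ} (hax : 0 ≤ a * x0)
    (hcurve : 9 * a ^ 2 + 4 * b ^ 3 = 18 * a * x0) (hs : 1 ≤ s) :
    9 * a ^ 2 - 18 * a * x0 * s + 4 * b ^ 3 ≤ 0 :=
  calc 9 * a ^ 2 - 18 * a * x0 * s + 4 * b ^ 3
      = -(18 * (a * x0) * (s - 1)) := by linear_combination hcurve
    _ ≤ 0 := neg_nonpos.2 (mul_nonneg (by positivity) (sub_nonneg.2 hs))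

theorem exp_neg_two_mul_pow_three (t : ℝ) : exp (-2 * t) ^ 3 = exp (-3 * t) ^ 2 := by
  rw [← exp_nat_mul, ← exp_nat_mul]
  ring_nf

theorem normal_curve_flows_inside_general
    (x0 a b : ℝ) (hb : 0 ≤ b)
    (hcurve : 9 * a ^ 2 + 4 * b ^ 3 = 18 * a * x0) :
    ∀ t : ℝ, 0 ≤ t →
      9 * (a * Real.exp (-3 * t) - x0) ^ 2 + 4 * (b * Real.exp (-2 * t)) ^ 3 ≤ 9 * x0 ^ 2 ∧
      9 * a ^ 2 - 18 * a * x0 * Real.exp (3 * t) + 4 * b ^ 3 ≤ 0 := by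
  intro t ht
  have hax := mul_nonneg_of_tricomi_curve hb hcurve
  constructor
  · rw [mul_pow, exp_neg_two_mul_pow_three]
    exact tricomi_scale_le hax hcurve (exp_pos _).le (exp_le_one_iff.2 (by linarith : -3 * t ≤ 0))
  · exact tricomi_sub_mul_nonpos hax hcurve (one_le_exp (by linarith : 0 ≤ 3 * t))

/-- Points of the normal Tricomi curve `9(x-x0)^2 + 4y^3 = 9x0^2`
flow, under `F_t(a,b) = (a e^{-3t}, b e^{-2t})` with `t ≥ 0`, into the closed
region bounded by the normal curve. -/
theorem normal_curve_flows_inside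
    (x0 a b : ℝ) (hx0 : x0 < 0)
    (ha : a ∈ Set.Icc (2 * x0) 0) (hb : 0 ≤ b)
    (hcurve : 9 * a ^ 2 + 4 * b ^ 3 = 18 * a * x0) :
    ∀ t : ℝ, 0 ≤ t →
      9 * (a * Real.exp (-3 * t) - x0) ^ 2 + 4 * (b * Real.exp (-2 * t)) ^ 3 ≤ 9 * x0 ^ 2 ∧
      9 * a ^ 2 - 18 * a * x0 * Real.exp (3 * t) + 4 * b ^ 3 ≤ 0 :=
  normal_curve_flows_inside_general x0 a b hb hcurve
end

section
/- Let x0 < −√3/4 and let h(x) = ((x − x0)^2 + (4/9) g(x)^4)^{1/2} with g(x) = (9x(2x0 − x)/4)^{1/3}, for x ∈ [2x0, 0], and let x_+ = x0 + (x0^2 − 3/16)^{1/2}. Then there exists a unique point x̄ ∈ (x0, x_+) such that h is convex on [2x0, 2x0 − x̄] and on [x̄, 0], and concave on [2x0 − x̄, x̄]. (In particular h is even about the line x = x0, i.e. h(2x0 − x) = h(x) for all x ∈ [2x0, 0].) -/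
/-!
Write `F = (x - x0)² + 4 g⁴ / 9`, so that `h = √F`. Since `g' = -3 (x - x0) / (2 g²)`, the second
derivative of `√F` has the sign of `2 F F'' - F'²`, and eliminating `(x - x0)² = x0² - 4 g³ / 9`
turns `g² (2 F F'' - F'²)` into `8/81 · P(g)` for a polynomial `P` in `g` alone. On `[0, b]`, where
`b³ = 9 x0² / 4` bounds `g³`, `P` is strictly decreasing, negative at `b` and positive at `3/4`
as soon as `x0² > 3/16`; so it has a single root `t`. Hence `h` is strictly concave where `g > t`,
i.e. for `|x - x0| < √(x0² - 4 t³ / 9) =: x̄ - x0`, and strictly convex beyond, and `t > 3/4` puts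
`x̄` below `x_+`. Strictness leaves no room for a second inflection point.
-/

open Set

theorem strictConvexOn_of_hasDerivAt2_pos {D : Set ℝ} (hD : Convex ℝ D) {f f' f'' : ℝ → ℝ}
    (hf : ContinuousOn f D) (hf' : ∀ x ∈ interior D, HasDerivAt f (f' x) x)
    (hf'' : ∀ x ∈ interior D, HasDerivAt f' (f'' x) x) (hf''₀ : ∀ x ∈ interior D, 0 < f'' x) :
    StrictConvexOn ℝ D f := by
  have hmono : StrictMonoOn f' (interior D) :=
    strictMonoOn_of_hasDerivWithinAt_pos hD.interior
      (fun x hx => (hf'' x hx).continuousAt.continuousWithinAt)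
      (by simpa only [interior_interior] using fun x hx => (hf'' x hx).hasDerivWithinAt)
      (by simpa only [interior_interior] using hf''₀)
  exact (hmono.congr fun x hx => (hf' x hx).deriv.symm).strictConvexOn_of_deriv hD hf

theorem strictConcaveOn_of_hasDerivAt2_neg {D : Set ℝ} (hD : Convex ℝ D) {f f' f'' : ℝ → ℝ}
    (hf : ContinuousOn f D) (hf' : ∀ x ∈ interior D, HasDerivAt f (f' x) x)
    (hf'' : ∀ x ∈ interior D, HasDerivAt f' (f'' x) x) (hf''₀ : ∀ x ∈ interior D, f'' x < 0) :
    StrictConcaveOn ℝ D f := by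
  simpa using (strictConvexOn_of_hasDerivAt2_pos hD hf.neg (fun x hx => (hf' x hx).neg)
    (fun x hx => (hf'' x hx).neg) fun x hx => neg_pos.2 (hf''₀ x hx)).neg

theorem hasDerivAt_div_two_sqrt {f f' : ℝ → ℝ} {f'' x : ℝ} (hf : HasDerivAt f (f' x) x)
    (hf' : HasDerivAt f' f'' x) (hx : 0 < f x) :
    HasDerivAt (fun y => f' y / (2 * √(f y)))
      ((2 * f x * f'' - f' x ^ 2) / (4 * f x * √(f x))) x := by
  have hs : 0 < √(f x) := Real.sqrt_pos.2 hx
  refine (hf'.fun_div ((hf.sqrt hx.ne').const_mul 2) (by positivity)).congr_deriv ?_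
  have := Real.sq_sqrt hx.le
  field_simp
  rw [this]; ring

theorem strictConvexOn_sqrt_of_hasDerivAt2 {D : Set ℝ} (hD : Convex ℝ D) {f f' f'' : ℝ → ℝ}
    (hf : ContinuousOn f D) (hf' : ∀ x ∈ interior D, HasDerivAt f (f' x) x)
    (hf'' : ∀ x ∈ interior D, HasDerivAt f' (f'' x) x) (hf₀ : ∀ x ∈ interior D, 0 < f x)
    (hdisc : ∀ x ∈ interior D, 0 < 2 * f x * f'' x - f' x ^ 2) :
    StrictConvexOn ℝ D fun x => √(f x) :=
  strictConvexOn_of_hasDerivAt2_pos hD hf.sqrt (fun x hx => (hf' x hx).sqrt (hf₀ x hx).ne')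
    (fun x hx => hasDerivAt_div_two_sqrt (hf' x hx) (hf'' x hx) (hf₀ x hx))
    fun x hx => by have := hf₀ x hx; exact div_pos (hdisc x hx) (by positivity)

theorem strictConcaveOn_sqrt_of_hasDerivAt2 {D : Set ℝ} (hD : Convex ℝ D) {f f' f'' : ℝ → ℝ}
    (hf : ContinuousOn f D) (hf' : ∀ x ∈ interior D, HasDerivAt f (f' x) x)
    (hf'' : ∀ x ∈ interior D, HasDerivAt f' (f'' x) x) (hf₀ : ∀ x ∈ interior D, 0 < f x)
    (hdisc : ∀ x ∈ interior D, 2 * f x * f'' x - f' x ^ 2 < 0) :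
    StrictConcaveOn ℝ D fun x => √(f x) :=
  strictConcaveOn_of_hasDerivAt2_neg hD hf.sqrt (fun x hx => (hf' x hx).sqrt (hf₀ x hx).ne')
    (fun x hx => hasDerivAt_div_two_sqrt (hf' x hx) (hf'' x hx) (hf₀ x hx))
    fun x hx => by have := hf₀ x hx; exact div_neg_of_neg_of_pos (hdisc x hx) (by positivity)

section

variable {𝕜 E β : Type*} [Field 𝕜] [LinearOrder 𝕜] [IsStrictOrderedRing 𝕜] [AddCommMonoid E]
  [Module 𝕜 E] [AddCommMonoid β] [PartialOrder β] [SMul 𝕜 β] {s : Set E} {f : E → β} {x y : E}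

theorem ConvexOn.not_strictConcaveOn (hf : ConvexOn 𝕜 s f) (hx : x ∈ s) (hy : y ∈ s)
    (hxy : x ≠ y) : ¬StrictConcaveOn 𝕜 s f := fun hf' =>
  (hf'.2 hx hy hxy (half_pos one_pos) (half_pos one_pos) (add_halves 1)).not_ge
    (hf.2 hx hy (half_pos one_pos).le (half_pos one_pos).le (add_halves 1))

theorem ConcaveOn.not_strictConvexOn (hf : ConcaveOn 𝕜 s f) (hx : x ∈ s) (hy : y ∈ s)
    (hxy : x ≠ y) : ¬StrictConvexOn 𝕜 s f := fun hf' =>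
  (hf'.2 hx hy hxy (half_pos one_pos) (half_pos one_pos) (add_halves 1)).not_ge
    (hf.2 hx hy (half_pos one_pos).le (half_pos one_pos).le (add_halves 1))

end

namespace Tricomi

variable {x0 x : ℝ}

noncomputable def g (x0 x : ℝ) : ℝ := (9 * x * (2 * x0 - x) / 4) ^ ((1 : ℝ) / 3)

noncomputable def F (x0 x : ℝ) : ℝ := (x - x0) ^ 2 + 4 / 9 * g x0 x ^ 4

noncomputable def F' (x0 x : ℝ) : ℝ := 2 * (x - x0) * (1 - 4 / 3 * g x0 x)

noncomputable def F'' (x0 x : ℝ) : ℝ :=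
  2 * (1 - 4 / 3 * g x0 x) + 4 * (x - x0) ^ 2 / g x0 x ^ 2

def P (x0 t : ℝ) : ℝ :=
  81 * x0 ^ 4 - 18 * x0 ^ 2 * t ^ 3 - 36 * x0 ^ 2 * t ^ 4 + 10 * t ^ 6 - 8 * t ^ 7

theorem F_reflect (x0 x : ℝ) : F x0 (2 * x0 - x) = F x0 x := by
  simp only [F, g]
  ring_nf

theorem g_pos (hx : x ∈ Ioo (2 * x0) 0) : 0 < g x0 x :=
  Real.rpow_pos_of_pos (by nlinarith [hx.1, hx.2]) _

theorem g_pow_three (hx : x ∈ Icc (2 * x0) 0) : g x0 x ^ 3 = 9 / 4 * (x0 ^ 2 - (x - x0) ^ 2) := by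
  rw [g, ← Real.rpow_natCast, ← Real.rpow_mul (by nlinarith [hx.1, hx.2])]
  norm_num
  ring

theorem continuous_F (x0 : ℝ) : Continuous (F x0) := by
  have : Continuous (g x0) := (Real.continuous_rpow_const (by norm_num)).comp (by fun_prop)
  unfold F
  fun_prop

theorem hasDerivAt_g (hx : x ∈ Ioo (2 * x0) 0) :
    HasDerivAt (g x0) (-(3 / 2) * (x - x0) / g x0 x ^ 2) x := by
  have hW : 0 < 9 * x * (2 * x0 - x) / 4 := by nlinarith [hx.1, hx.2]
  have hg := g_pos hx
  have hg3 := g_pow_three (Ioo_subset_Icc_self hx)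
  refine ((((((hasDerivAt_id' x).const_mul 9).fun_mul ((hasDerivAt_const x (2 * x0)).fun_sub
    (hasDerivAt_id' x))).div_const 4).rpow_const (p := 1 / 3) (Or.inl hW.ne'))).congr_deriv ?_
  have hW' : 9 * x * (2 * x0 - x) / 4 = g x0 x ^ 3 := by rw [hg3]; ring
  rw [Real.rpow_sub_one hW.ne', ← g, hW']
  field_simp
  ring

theorem hasDerivAt_F (hx : x ∈ Ioo (2 * x0) 0) : HasDerivAt (F x0) (F' x0 x) x := by
  have hg := g_pos hx
  refine ((((hasDerivAt_id' x).sub_const x0).fun_pow 2).fun_add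
    (((hasDerivAt_g hx).fun_pow 4).const_mul (4 / 9))).congr_deriv ?_
  simp only [F']
  field_simp
  ring

theorem hasDerivAt_F' (hx : x ∈ Ioo (2 * x0) 0) : HasDerivAt (F' x0) (F'' x0 x) x := by
  have hg := g_pos hx
  refine ((((hasDerivAt_id' x).sub_const x0).const_mul 2).fun_mul
    (((hasDerivAt_g hx).const_mul (4 / 3)).const_sub 1)).congr_deriv ?_
  simp only [F'']
  field_simp

theorem F_pos (hx : x ∈ Ioo (2 * x0) 0) : 0 < F x0 x := by
  have := g_pos hx
  unfold F
  positivity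

theorem discr_eq (hx : x ∈ Ioo (2 * x0) 0) :
    2 * F x0 x * F'' x0 x - F' x0 x ^ 2 = 8 / 81 * P x0 (g x0 x) / g x0 x ^ 2 := by
  have hg := g_pos hx
  have hg3 := g_pow_three (Ioo_subset_Icc_self hx)
  rw [eq_div_iff (by positivity)]
  have : (2 * F x0 x * F'' x0 x - F' x0 x ^ 2) * g x0 x ^ 2 =
      8 * ((x - x0) ^ 2) ^ 2 + 16 / 3 * (x - x0) ^ 2 * g x0 x ^ 3
        - 32 / 9 * (x - x0) ^ 2 * g x0 x ^ 4 + 16 / 9 * g x0 x ^ 6 - 64 / 27 * g x0 x ^ 7 := by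
    simp only [F, F', F'']
    field_simp
    ring
  rw [this, P]
  linear_combination (4 / 9) * (8 * ((x - x0) ^ 2 + x0 ^ 2 - 4 / 9 * g x0 x ^ 3)
    + 16 / 3 * g x0 x ^ 3 - 32 / 9 * g x0 x ^ 4) * hg3

theorem hasDerivAt_P (x0 t : ℝ) :
    HasDerivAt (P x0)
      (-54 * x0 ^ 2 * t ^ 2 - 144 * x0 ^ 2 * t ^ 3 + 60 * t ^ 5 - 56 * t ^ 6) t := by
  refine (((((hasDerivAt_const t (81 * x0 ^ 4)).fun_sub ((hasDerivAt_pow 3 t).const_mul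
    (18 * x0 ^ 2))).fun_sub ((hasDerivAt_pow 4 t).const_mul (36 * x0 ^ 2))).fun_add
    ((hasDerivAt_pow 6 t).const_mul 10)).fun_sub ((hasDerivAt_pow 7 t).const_mul 8)).congr_deriv ?_
  norm_num
  ring

theorem P_strictAntiOn {b : ℝ} (hb : 3 / 4 < b) (hb3 : b ^ 3 = 9 / 4 * x0 ^ 2) :
    StrictAntiOn (P x0) (Icc 0 b) := by
  refine strictAntiOn_of_deriv_neg (convex_Icc 0 b)
    (fun t _ => (hasDerivAt_P x0 t).continuousAt.continuousWithinAt) fun t ht => ?_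
  rw [interior_Icc] at ht
  obtain ⟨ht0, htb⟩ := ht
  have hbt : 0 < b - t := sub_pos.2 htb
  have h16b : 0 < 16 * b - 9 := by linarith
  rw [(hasDerivAt_P x0 t).deriv]
  have : -54 * x0 ^ 2 * t ^ 2 - 144 * x0 ^ 2 * t ^ 3 + 60 * t ^ 5 - 56 * t ^ 6 =
      -(t ^ 2 * (b ^ 2 * (24 * (b - t) + 4 * t * (16 * b - 9)) + 60 * t * (b - t) * (b + t)
        + 56 * t ^ 4)) := by
    linear_combination (24 * t ^ 2 + 64 * t ^ 3) * hb3
  rw [this, neg_lt_zero]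
  have : 0 < b + t := by linarith
  positivity

theorem P_three_quarters_pos (h : 3 / 16 < x0 ^ 2) : 0 < P x0 (3 / 4) := by
  have : P x0 (3 / 4) = 81 * (x0 ^ 2 - 3 / 16) * (x0 ^ 2 - 3 / 64) := by
    unfold P
    ring
  rw [this]
  have : 0 < x0 ^ 2 - 3 / 16 := by linarith
  have : 0 < x0 ^ 2 - 3 / 64 := by linarith
  positivity

theorem P_neg {b : ℝ} (hb : 3 / 4 < b) (hb3 : b ^ 3 = 9 / 4 * x0 ^ 2) : P x0 b < 0 := by
  have : P x0 b = 6 * b ^ 6 * (3 - 4 * b) := by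
    unfold P
    linear_combination (-(4 / 9)) * (81 * (x0 ^ 2 + 4 / 9 * b ^ 3) - 18 * b ^ 3 - 36 * b ^ 4) * hb3
  rw [this]
  nlinarith [pow_pos (show 0 < b by linarith) 6]

theorem exists_sign_change (h : 3 / 16 < x0 ^ 2) :
    ∃ xb ∈ Ioo x0 (x0 + √(x0 ^ 2 - 3 / 16)), ∀ x ∈ Icc (2 * x0) 0,
      ((x - x0) ^ 2 < (xb - x0) ^ 2 → P x0 (g x0 x) < 0) ∧
      ((xb - x0) ^ 2 < (x - x0) ^ 2 → 0 < P x0 (g x0 x)) := by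
  obtain ⟨b, hb0, hb3⟩ : ∃ b : ℝ, 0 < b ∧ b ^ 3 = 9 / 4 * x0 ^ 2 := by
    refine ⟨(9 / 4 * x0 ^ 2) ^ ((1 : ℝ) / 3), by positivity, ?_⟩
    rw [← Real.rpow_natCast, ← Real.rpow_mul (by positivity)]
    norm_num
  have hb : 3 / 4 < b := lt_of_pow_lt_pow_left₀ 3 hb0.le (by rw [hb3]; linarith)
  obtain ⟨t, ⟨ht, htb⟩, hPt⟩ : ∃ t ∈ Ioo (3 / 4) b, P x0 t = 0 :=
    intermediate_value_Ioo' hb.le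
      (continuous_iff_continuousAt.2 (hasDerivAt_P x0 · |>.continuousAt)).continuousOn
      ⟨P_neg hb hb3, P_three_quarters_pos h⟩
  have ht3 : (3 / 4) ^ 3 < t ^ 3 := pow_lt_pow_left₀ ht (by norm_num) three_ne_zero
  have htb3 : t ^ 3 < b ^ 3 := pow_lt_pow_left₀ htb (by linarith) three_ne_zero
  have hd2 : √(x0 ^ 2 - 4 / 9 * t ^ 3) ^ 2 = x0 ^ 2 - 4 / 9 * t ^ 3 := Real.sq_sqrt (by linarith)
  refine ⟨x0 + √(x0 ^ 2 - 4 / 9 * t ^ 3), ⟨?_, ?_⟩, fun x hx => ?_⟩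
  · exact lt_add_of_pos_right x0 (Real.sqrt_pos.2 (by linarith))
  · exact (add_lt_add_iff_left x0).2 (Real.sqrt_lt_sqrt (by linarith)
      (by linarith : x0 ^ 2 - 4 / 9 * t ^ 3 < x0 ^ 2 - 3 / 16))
  have hg3 := g_pow_three hx
  have hg0 : 0 ≤ g x0 x := Real.rpow_nonneg (by nlinarith [hx.1, hx.2]) _
  have hgb : g x0 x ≤ b := le_of_pow_le_pow_left₀ three_ne_zero hb0.le (by nlinarith)
  have hanti := P_strictAntiOn hb hb3
  have hgmem : g x0 x ∈ Icc 0 b := ⟨hg0, hgb⟩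
  have htmem : t ∈ Icc 0 b := ⟨by linarith, htb.le⟩
  simp only [add_sub_cancel_left, hd2]
  constructor
  · intro hx'
    rw [← hPt, hanti.lt_iff_gt hgmem htmem, ← pow_lt_pow_iff_left₀ htmem.1 hg0 three_ne_zero]
    linarith
  · intro hx'
    rw [← hPt, hanti.lt_iff_gt htmem hgmem, ← pow_lt_pow_iff_left₀ hg0 htmem.1 three_ne_zero]
    linarith

theorem strictConvexOn_sqrt_F {p q : ℝ} (hp : 2 * x0 ≤ p) (hq : q ≤ 0)
    (hP : ∀ x ∈ Ioo p q, 0 < P x0 (g x0 x)) : StrictConvexOn ℝ (Icc p q) fun x => √(F x0 x) := by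
  have hsub : interior (Icc p q) ⊆ Ioo (2 * x0) 0 := by
    rw [interior_Icc]
    exact Ioo_subset_Ioo hp hq
  refine strictConvexOn_sqrt_of_hasDerivAt2 (convex_Icc p q) (continuous_F x0).continuousOn
    (fun x hx => hasDerivAt_F (hsub hx)) (fun x hx => hasDerivAt_F' (hsub hx))
    (fun x hx => F_pos (hsub hx)) fun x hx => ?_
  have := g_pos (hsub hx)
  have := hP x (interior_Icc (a := p) ▸ hx)
  rw [discr_eq (hsub hx)]
  positivity

theorem strictConcaveOn_sqrt_F {p q : ℝ} (hp : 2 * x0 ≤ p) (hq : q ≤ 0)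
    (hP : ∀ x ∈ Ioo p q, P x0 (g x0 x) < 0) : StrictConcaveOn ℝ (Icc p q) fun x => √(F x0 x) := by
  have hsub : interior (Icc p q) ⊆ Ioo (2 * x0) 0 := by
    rw [interior_Icc]
    exact Ioo_subset_Ioo hp hq
  refine strictConcaveOn_sqrt_of_hasDerivAt2 (convex_Icc p q) (continuous_F x0).continuousOn
    (fun x hx => hasDerivAt_F (hsub hx)) (fun x hx => hasDerivAt_F' (hsub hx))
    (fun x hx => F_pos (hsub hx)) fun x hx => ?_
  have := g_pos (hsub hx)
  have := hP x (interior_Icc (a := p) ▸ hx)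
  rw [discr_eq (hsub hx)]
  exact div_neg_of_neg_of_pos (by linarith) (by positivity)

theorem inflection_convexity {xb : ℝ} (hxb : x0 < xb) (hxb0 : xb ≤ 0)
    (hsign : ∀ x ∈ Icc (2 * x0) 0, ((x - x0) ^ 2 < (xb - x0) ^ 2 → P x0 (g x0 x) < 0) ∧
      ((xb - x0) ^ 2 < (x - x0) ^ 2 → 0 < P x0 (g x0 x))) :
    StrictConvexOn ℝ (Icc (2 * x0) (2 * x0 - xb)) (fun x => √(F x0 x)) ∧
      StrictConvexOn ℝ (Icc xb 0) (fun x => √(F x0 x)) ∧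
      StrictConcaveOn ℝ (Icc (2 * x0 - xb) xb) (fun x => √(F x0 x)) := by
  refine ⟨strictConvexOn_sqrt_F le_rfl (by linarith) fun x hx => ?_,
    strictConvexOn_sqrt_F (by linarith) le_rfl fun x hx => ?_,
    strictConcaveOn_sqrt_F (by linarith) hxb0 fun x hx => ?_⟩
  · exact (hsign x ⟨hx.1.le, by linarith [hx.2]⟩).2 (by nlinarith [hx.2])
  · exact (hsign x ⟨by linarith [hx.1], hx.2.le⟩).2 (by nlinarith [hx.1])
  · exact (hsign x ⟨by linarith [hx.1], by linarith [hx.2]⟩).1 (by nlinarith [hx.1, hx.2])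

end Tricomi

/-- Lemma 4.5 ii, inflection: for `x0 < -√3/4` there is a
unique `x̄ ∈ (x0, x_+)` such that `h` is convex on `[2x0, 2x0 - x̄]` and on
`[x̄, 0]` and concave on `[2x0 - x̄, x̄]`; moreover `h` is even about `x = x0`. -/
theorem h_unique_inflection_large_x0
    (x0 : ℝ) (hx0 : x0 < -Real.sqrt 3 / 4)
    (g h : ℝ → ℝ)
    (hg : ∀ x : ℝ, g x = (9 * x * (2 * x0 - x) / 4) ^ ((1 : ℝ) / 3))
    (hh : ∀ x : ℝ, h x = ((x - x0) ^ 2 + (4 / 9) * (g x) ^ 4) ^ ((1 : ℝ) / 2))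
    (xp : ℝ) (hxp : xp = x0 + (x0 ^ 2 - 3 / 16) ^ ((1 : ℝ) / 2)) :
    (∀ x ∈ Icc (2 * x0) 0, h (2 * x0 - x) = h x) ∧
    (∃! xb : ℝ, xb ∈ Ioo x0 xp ∧
      ConvexOn ℝ (Icc (2 * x0) (2 * x0 - xb)) h ∧
      ConvexOn ℝ (Icc xb 0) h ∧
      ConcaveOn ℝ (Icc (2 * x0 - xb) xb) h) := by
  obtain rfl : g = Tricomi.g x0 := funext hg
  obtain rfl : h = fun x => √(Tricomi.F x0 x) :=
    funext fun x => (hh x).trans (Real.sqrt_eq_rpow _).symm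
  rw [← Real.sqrt_eq_rpow] at hxp
  subst hxp
  have hsqrt3 : √3 ^ 2 = 3 := Real.sq_sqrt (by norm_num)
  have hx0_sq : 3 / 16 < x0 ^ 2 := by nlinarith [Real.sqrt_nonneg 3]
  have hxp_neg : x0 + √(x0 ^ 2 - 3 / 16) < 0 := by
    have hx0_neg : x0 < 0 := by linarith [Real.sqrt_nonneg 3]
    linarith [(Real.sqrt_lt' (by linarith)).2 (by nlinarith : x0 ^ 2 - 3 / 16 < (-x0) ^ 2)]
  obtain ⟨xb, hxb, hsign⟩ := Tricomi.exists_sign_change hx0_sq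
  have hxb0 := hxb.2.trans hxp_neg
  obtain ⟨hleft, hright, hmid⟩ := Tricomi.inflection_convexity hxb.1 hxb0.le hsign
  refine ⟨fun x _ => congrArg Real.sqrt (Tricomi.F_reflect x0 x), xb,
    ⟨hxb, hleft.convexOn, hright.convexOn, hmid.concaveOn⟩, ?_⟩
  rintro y ⟨hy, -, hyr, hym⟩
  rcases lt_trichotomy y xb with hlt | rfl | hgt
  · have hconvex := hyr.subset (Icc_subset_Icc_right hxb0.le) (convex_Icc y xb)
    exact absurd (hmid.subset (Icc_subset_Icc (by linarith [hy.1, hxb.1]) le_rfl) (convex_Icc y xb))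
      (hconvex.not_strictConcaveOn (left_mem_Icc.2 hlt.le) (right_mem_Icc.2 hlt.le) hlt.ne)
  · rfl
  · have hconcave :=
      hym.subset (Icc_subset_Icc (by linarith [hy.1, hxb.1]) le_rfl) (convex_Icc xb y)
    exact absurd (hright.subset (Icc_subset_Icc_right (hy.2.trans hxp_neg).le) (convex_Icc xb y))
      (hconcave.not_strictConvexOn (left_mem_Icc.2 hgt.le) (right_mem_Icc.2 hgt.le) hgt.ne)
end

section
/- Let x0 ∈ [−√3/4, 0) and let G₁(x) = g₁(x)/h(x) for x ∈ [2x0, 0], where g₁(x) = 3x(2x − 3x0) and h(x) = ((x − x0)^2 + (4/9) g(x)^4)^{1/2} with g(x) = (9x(2x0 − x)/4)^{1/3}. Then C₅(x0) ≤ G₁(x) ≤ C₆(x0) for every x ∈ [2x0, 0], where C₅(x0) = −(3/2)^{8/3} |x0|^{2/3} and C₆(x0) = 2^{8/3} · 3 |x0| / (2^{4/3} + 9 |x0|^{2/3})^{1/2}. -/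
open Set

private lemma rpow13_pow (y : ℝ) (hy : 0 ≤ y) (n : ℕ) :
    (y ^ ((1:ℝ)/3)) ^ n = y ^ ((n:ℝ)/3) := by
  rw [← Real.rpow_natCast (y ^ ((1:ℝ)/3)) n, ← Real.rpow_mul hy]
  congr 1; ring

private lemma cbrt_mono (p q : ℝ) (hp : 0 ≤ p) (hq : 0 < q) (h : p^3 ≤ q^3) : p ≤ q := by
  nlinarith [sq_nonneg (p - q), sq_nonneg (p + q), mul_pos hq hq, mul_nonneg hp hp]

private lemma key_lower (x0 x a r m : ℝ) (hx0 : x0 < 0) (ht2 : x0^2 ≤ 3/16)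
    (hx1 : 2*x0 ≤ x) (hx2 : x ≤ 0) (hx3 : 3*x0 ≤ 2*x)
    (ha0 : 0 ≤ a) (ha3 : a^3 = x0^2) (hr0 : 0 ≤ r) (hr3 : r^3 = x*(2*x0-x))
    (hm0 : 0 < m) (hm3 : m^3 = 3/2) :
    (3*x*(2*x-3*x0))^2 ≤ (m^8*a)^2 * ((x-x0)^2 + 4/9*(m^8*r^4)) := by
  -- cube-root monotonicity: 2a ≤ m since 8a³ = 8x0² ≤ 3/2 = m³
  have hma : 2*a ≤ m := by
    apply cbrt_mono _ _ (by linarith) hm0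
    have e : (2*a)^3 = 8*a^3 := by ring
    rw [e, ha3]; linarith
  -- AM-GM step: 108 r³ a³ ≤ 81 r⁴ a² + 27 a⁶
  have hL3 : 108*r^3*a^3 ≤ 81*r^4*a^2 + 27*a^6 := by
    have h1 : 0 ≤ 27*(a^2*(r-a)^2*(3*r^2+2*r*a+a^2)) := by positivity
    linarith [h1]
  have ha6 : a^6 = x0^4 := by
    have : a^6 = (a^3)^2 := by ring
    rw [this, ha3]; ring
  rw [hr3, ha3, ha6] at hL3
  -- polynomial bound: 64 x²(2x-3x0)² ≤ 81 x0⁴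
  have hP : 0 ≤ x*(3*x0-2*x) := by
    linarith [mul_nonneg (neg_nonneg.2 hx2) (by linarith : (0:ℝ) ≤ 2*x - 3*x0)]
  have hL1 : 64*x^2*(2*x-3*x0)^2 ≤ 81*x0^4 := by
    linarith [mul_nonneg (sq_nonneg (3*x0-4*x)) (by linarith [sq_nonneg x0] : (0:ℝ) ≤ 9*x0^2 + 8*(x*(3*x0-2*x)))]
  -- coefficient facts
  have hm16 : (243/16)*x0^2 ≤ m^16*a^2 := by
    have h1 : 2*a^3 ≤ m*a^2 := by linarith [mul_le_mul_of_nonneg_right hma (mul_nonneg ha0 ha0)]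
    have h2 : m^16 = (243/32)*m := by
      have : m^16 = (m^3)^5*m := by ring
      rw [this, hm3]; ring
    rw [h2]; linarith [h1, ha3.ge, ha3.le]
  have hm24 : m^24 = 6561/256 := by
    have : m^24 = (m^3)^8 := by ring
    rw [this, hm3]; norm_num
  have e1 : (m^8*a)^2 * ((x-x0)^2 + 4/9*(m^8*r^4))
      = (m^16*a^2)*(x-x0)^2 + (4/9)*m^24*(a^2*r^4) := by ring
  rw [e1, hm24]
  have h3 : (243/16)*x0^2*(x-x0)^2 ≤ (m^16*a^2)*(x-x0)^2 :=
    mul_le_mul_of_nonneg_right hm16 (sq_nonneg _)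
  linarith [hL1, hL3, h3]

set_option maxHeartbeats 1000000 in
/-- Corollary 4.6 i: for `x0 ∈ [-√3/4, 0)` the function
`G₁ = g₁/h`, with `g₁(x) = 3x(2x - 3x0)`, satisfies
`C₅(x0) ≤ G₁(x) ≤ C₆(x0)` on `[2x0, 0]`. -/
theorem G1_bounds_small_x0
    (x0 : ℝ) (hx0l : -Real.sqrt 3 / 4 ≤ x0) (hx0 : x0 < 0)
    (g h g1 G1 : ℝ → ℝ)
    (hg : ∀ x : ℝ, g x = (9 * x * (2 * x0 - x) / 4) ^ ((1 : ℝ) / 3))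
    (hh : ∀ x : ℝ, h x = ((x - x0) ^ 2 + (4 / 9) * (g x) ^ 4) ^ ((1 : ℝ) / 2))
    (hg1 : ∀ x : ℝ, g1 x = 3 * x * (2 * x - 3 * x0))
    (hG1 : ∀ x : ℝ, G1 x = g1 x / h x) :
    ∀ x ∈ Icc (2 * x0) 0,
      -(3 / 2) ^ ((8 : ℝ) / 3) * |x0| ^ ((2 : ℝ) / 3) ≤ G1 x ∧
      G1 x ≤ 2 ^ ((8 : ℝ) / 3) * 3 * |x0| /
        (2 ^ ((4 : ℝ) / 3) + 9 * |x0| ^ ((2 : ℝ) / 3)) ^ ((1 : ℝ) / 2) := by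
  intro x hx
  obtain ⟨hx1, hx2⟩ := hx
  have habs : |x0| = -x0 := abs_of_neg hx0
  have hs3 : Real.sqrt 3 ^ 2 = 3 := Real.sq_sqrt (by norm_num)
  have ht2 : x0^2 ≤ 3/16 := by nlinarith [Real.sqrt_nonneg 3]
  obtain ⟨m, hmdef⟩ : ∃ m : ℝ, m = ((3:ℝ)/2) ^ ((1:ℝ)/3) := ⟨_, rfl⟩
  obtain ⟨c, hcdef⟩ : ∃ c : ℝ, c = (2:ℝ) ^ ((1:ℝ)/3) := ⟨_, rfl⟩
  obtain ⟨a, hadef⟩ : ∃ a : ℝ, a = |x0| ^ ((2:ℝ)/3) := ⟨_, rfl⟩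
  rw [show |x0| ^ ((2:ℝ)/3) = a from hadef.symm]
  have hm0 : (0:ℝ) < m := by rw [hmdef]; exact Real.rpow_pos_of_pos (by norm_num) _
  have hc0 : (0:ℝ) < c := by rw [hcdef]; exact Real.rpow_pos_of_pos (by norm_num) _
  have hm3 : m^3 = 3/2 := by
    rw [hmdef, rpow13_pow _ (by norm_num)]
    norm_num
  have hc3 : c^3 = 2 := by
    rw [hcdef, rpow13_pow _ (by norm_num)]
    norm_num
  have hm8 : ((3:ℝ)/2) ^ ((8:ℝ)/3) = m^8 := by
    rw [hmdef, rpow13_pow _ (by norm_num)]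
    norm_num
  have hc8 : (2:ℝ) ^ ((8:ℝ)/3) = c^8 := by
    rw [hcdef, rpow13_pow _ (by norm_num)]
    norm_num
  have hc4 : (2:ℝ) ^ ((4:ℝ)/3) = c^4 := by
    rw [hcdef, rpow13_pow _ (by norm_num)]
    norm_num
  have ha0 : 0 ≤ a := by rw [hadef]; exact Real.rpow_nonneg (abs_nonneg _) _
  have ha3 : a^3 = x0^2 := by
    rw [hadef, ← Real.rpow_natCast (|x0| ^ ((2:ℝ)/3)) 3, ← Real.rpow_mul (abs_nonneg x0)]
    norm_num
  have hxp : 0 ≤ x*(2*x0-x) := by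
    linarith [mul_nonneg (neg_nonneg.2 hx2) (by linarith : (0:ℝ) ≤ x - 2*x0)]
  obtain ⟨r, hrdef⟩ : ∃ r : ℝ, r = (x*(2*x0-x)) ^ ((1:ℝ)/3) := ⟨_, rfl⟩
  have hr0 : 0 ≤ r := by rw [hrdef]; exact Real.rpow_nonneg hxp _
  have hr3 : r^3 = x*(2*x0-x) := by
    rw [hrdef, rpow13_pow _ hxp]
    norm_num
  have h94 : ((9:ℝ)/4) ^ ((1:ℝ)/3) = m^2 := by
    rw [hmdef, rpow13_pow ((3:ℝ)/2) (by norm_num) 2,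
      show (9:ℝ)/4 = ((3:ℝ)/2)^(2:ℕ) from by norm_num,
      ← Real.rpow_natCast ((3:ℝ)/2) 2, ← Real.rpow_mul (by norm_num : (0:ℝ) ≤ 3/2)]
    norm_num
  have hgx : g x = m^2 * r := by
    rw [hg x, show 9*x*(2*x0-x)/4 = (9/4)*(x*(2*x0-x)) by ring,
      Real.mul_rpow (by norm_num) hxp, h94, ← hrdef]
  have hg4 : g x ^ 4 = m^8 * r^4 := by rw [hgx]; ring
  have hA : h x = Real.sqrt ((x-x0)^2 + 4/9*(m^8*r^4)) := by
    rw [hh x, hg4, Real.sqrt_eq_rpow]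
  have hApos : 0 < (x-x0)^2 + 4/9*(m^8*r^4) := by
    rcases eq_or_ne x x0 with he | hne
    · have hr3' : r^3 = x0^2 := by rw [hr3, he]; ring
      have hrpos : 0 < r := by
        rcases hr0.lt_or_eq with h' | h'
        · exact h'
        · exfalso
          rw [← h'] at hr3'
          have h0 : (0:ℝ) = x0^2 := by simpa using hr3'
          linarith [mul_pos (neg_pos.2 hx0) (neg_pos.2 hx0), sq_nonneg x0,
            mul_self_pos.2 (ne_of_lt hx0), sq_abs x0]
      have := mul_pos (pow_pos hm0 8) (pow_pos hrpos 4)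
      linarith [sq_nonneg (x-x0)]
    · have h1 : 0 < (x-x0)^2 := by
        have hne' : x - x0 ≠ 0 := sub_ne_zero.mpr hne
        positivity
      linarith [mul_nonneg (pow_nonneg hm0.le 8) (pow_nonneg hr0 4)]
  have hhpos : 0 < h x := by rw [hA]; exact Real.sqrt_pos.mpr hApos
  have hh2 : h x ^ 2 = (x-x0)^2 + 4/9*(m^8*r^4) := by
    rw [hA, Real.sq_sqrt hApos.le]
  constructor
  · -- lower bound
    rw [hG1 x, hm8, le_div_iff₀ hhpos]
    by_cases hsgn : 0 ≤ g1 x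
    · linarith [mul_nonneg (mul_nonneg (pow_nonneg hm0.le 8) ha0) hhpos.le,
        mul_nonneg (mul_nonneg (pow_nonneg hm0.le 8) ha0) hhpos.le]
    · push_neg at hsgn
      rw [hg1] at hsgn
      have hx3 : 3*x0 ≤ 2*x := by
        by_contra hcon
        push_neg at hcon
        linarith [mul_nonneg (neg_nonneg.2 hx2) (by linarith : (0:ℝ) ≤ 3*x0 - 2*x)]
      have key := key_lower x0 x a r m hx0 ht2 hx1 hx2 hx3 ha0 ha3 hr0 hr3 hm0 hm3
      rw [hg1]
      have hKh : 0 ≤ m^8*a*h x :=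
        mul_nonneg (mul_nonneg (pow_nonneg hm0.le 8) ha0) hhpos.le
      have hsq : (3*x*(2*x-3*x0))^2 ≤ (m^8*a*h x)^2 := by
        have e : (m^8*a*h x)^2 = (m^8*a)^2 * (h x ^ 2) := by ring
        rw [e, hh2]; exact key
      have habs2 := Real.sqrt_le_sqrt hsq
      rw [Real.sqrt_sq_eq_abs, Real.sqrt_sq_eq_abs] at habs2
      have := neg_abs_le (3*x*(2*x-3*x0))
      rw [abs_of_nonneg hKh] at habs2
      linarith [habs2, this]
  · -- upper bound
    rw [hG1 x, hc8, hc4,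
      show (c^4 + 9*a) ^ ((1:ℝ)/2) = Real.sqrt (c^4 + 9*a) from (Real.sqrt_eq_rpow _).symm]
    have hDpos : 0 < Real.sqrt (c^4 + 9*a) := Real.sqrt_pos.2 (by positivity)
    by_cases hsgn : g1 x ≤ 0
    · have h1 : g1 x / h x ≤ 0 := div_nonpos_of_nonpos_of_nonneg hsgn hhpos.le
      have h2 : 0 ≤ c^8*3*|x0| / Real.sqrt (c^4 + 9*a) := by positivity
      linarith
    · push_neg at hsgn
      rw [div_le_div_iff₀ hhpos hDpos]
      have hx5 : 2*x < 3*x0 := by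
        by_contra hcon
        push_neg at hcon
        rw [hg1] at hsgn
        linarith [mul_nonneg (neg_nonneg.2 hx2) (by linarith : (0:ℝ) ≤ 2*x - 3*x0)]
      have hge : x0 - x ≤ h x := by
        calc x0 - x ≤ |x - x0| := by rw [abs_sub_comm]; exact le_abs_self _
          _ = Real.sqrt ((x-x0)^2) := (Real.sqrt_sq_eq_abs _).symm
          _ ≤ h x := by
              rw [hA]
              exact Real.sqrt_le_sqrt (by nlinarith [mul_nonneg (pow_nonneg hm0.le 8) (pow_nonneg hr0 4)])
      have h6 : g1 x ≤ 6*(-x0)*h x := by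
        rw [hg1]
        have hq : 3*x*(2*x-3*x0) ≤ 6*(-x0)*(x0-x) := by
          linarith [mul_nonneg (by linarith : (0:ℝ) ≤ x - 2*x0) (by linarith : (0:ℝ) ≤ x0 - 2*x)]
        linarith [mul_le_mul_of_nonneg_left hge (by linarith : (0:ℝ) ≤ 6*(-x0))]
      have hc4e : c^4 = 2*c := by
        have : c^4 = c^3*c := by ring
        rw [this, hc3]
      have hc16 : c^16 = 32*c := by
        have : c^16 = (c^3)^5*c := by ring
        rw [this, hc3]; ring
      have hae : a ≤ 2*c/3 := by
        apply cbrt_mono _ _ ha0 (by positivity)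
        have e : (2*c/3)^3 = (8/27)*c^3 := by ring
        rw [e, hc3, ha3]; linarith
      have hsqle : Real.sqrt (c^4 + 9*a) ≤ c^8/2 := by
        calc Real.sqrt (c^4 + 9*a) ≤ Real.sqrt ((c^8/2)^2) := by
              apply Real.sqrt_le_sqrt
              have : (c^8/2)^2 = c^16/4 := by ring
              rw [this]; linarith [hc4e, hc16, hae]
          _ = c^8/2 := Real.sqrt_sq (by positivity)
      rw [habs]
      calc g1 x * Real.sqrt (c^4 + 9*a) ≤ (6*(-x0)*h x) * (c^8/2) :=
            mul_le_mul h6 hsqle (Real.sqrt_nonneg _)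
              (mul_nonneg (by linarith : (0:ℝ) ≤ 6*(-x0)) hhpos.le)
        _ = c^8*3*(-x0)*h x := by ring
end

section
/- Let x0 < −√3/4 and let G₁(x) = g₁(x)/h(x) for x ∈ [2x0, 0], where g₁(x) = 3x(2x − 3x0) and h(x) = ((x − x0)^2 + (4/9) g(x)^4)^{1/2} with g(x) = (9x(2x0 − x)/4)^{1/3}. Then C₇(x0) ≤ G₁(x) ≤ C₈(x0) for every x ∈ [2x0, 0], where C₇(x0) = −(3/2)^3 x0^2 / (x0^2 − 3/64)^{1/2}, and C₈(x0) = 2^{8/3} · 3 |x0| / (2^{4/3} + 9 |x0|^{2/3})^{1/2} if −1/2 < x0 < −√3/4, while C₈(x0) = 6 x0^2 / (x0^2 − 3/64)^{1/2} if x0 ≤ −1/2. -/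
/-!
With `u = g(x) ≥ 0` we have `u³ = (9/4)(x0² - (x - x0)²)`, hence
`h(x)² = x0² + (4/9)(u⁴ - u³) ≥ x0² - 3/64`, the quartic `u⁴ - u³` being minimal at
`u = 3/4`; also `h(x) ≥ |x - x0|`. Completing the square gives `g₁ ≥ -(27/8) x0²`, which
with the first bound on `h` yields `C₇`. On `[2x0, 0]` one has `g₁(x) ≤ 6|x0| |x - x0|`,
so `G₁ ≤ 6|x0|`, and `6|x0|` lies below both branches of `C₈`.
-/

open Set Real

lemma neg_le_pow_four_sub_pow_three (u : ℝ) : -(27 / 256) ≤ u ^ 4 - u ^ 3 := by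
  nlinarith [mul_nonneg (sq_nonneg (u - 3 / 4)) (sq_nonneg (u + 1 / 4)), sq_nonneg (u - 3 / 4)]

lemma sub_le_sq_add_pow_four_of_pow_three_eq {x0 s u : ℝ}
    (hu : u ^ 3 = 9 / 4 * (x0 ^ 2 - s ^ 2)) : x0 ^ 2 - 3 / 64 ≤ s ^ 2 + 4 / 9 * u ^ 4 := by
  linarith [neg_le_pow_four_sub_pow_three u]

lemma rpow_one_third_pow_three_of_mem_Icc {x0 x : ℝ} (hx : x ∈ Icc (2 * x0) 0) :
    ((9 * x * (2 * x0 - x) / 4) ^ ((1 : ℝ) / 3)) ^ 3 = 9 / 4 * (x0 ^ 2 - (x - x0) ^ 2) := by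
  have hA : 0 ≤ 9 * x * (2 * x0 - x) / 4 := by nlinarith [hx.1, hx.2]
  rw [show (1 : ℝ) / 3 = ((3 : ℕ) : ℝ)⁻¹ by norm_num,
    rpow_inv_natCast_pow hA three_ne_zero]
  ring

lemma neg_le_mul_sub_mul (x x0 : ℝ) : -(3 / 2) ^ 3 * x0 ^ 2 ≤ 3 * x * (2 * x - 3 * x0) := by
  nlinarith [sq_nonneg (4 * x - 3 * x0)]

lemma mul_sub_mul_le_of_mem_Icc {x0 x : ℝ} (hx : x ∈ Icc (2 * x0) 0) :
    3 * x * (2 * x - 3 * x0) ≤ 6 * |x0| * |x - x0| := by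
  obtain ⟨hlo, hhi⟩ := hx
  rw [abs_of_nonpos (by linarith : x0 ≤ 0)]
  rcases le_total (2 * x) (3 * x0) with hmid | hmid
  · -- here `6|x0||x - x0| - g₁(x) = 3(x0 - 2x)(x - 2x0)`
    rw [abs_of_nonpos (by linarith : x - x0 ≤ 0)]
    nlinarith
  · nlinarith [abs_nonneg (x - x0)]

lemma div_le_div_of_nonpos_of_le_of_le {c b m h : ℝ} (hc : c ≤ 0) (hm : 0 < m) (hmh : m ≤ h)
    (hcb : c ≤ b) : c / m ≤ b / h :=
  calc c / m ≤ c / h := by rw [div_le_div_iff₀ hm (hm.trans_le hmh)]; nlinarith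
    _ ≤ b / h := div_le_div_of_nonneg_right hcb (hm.le.trans hmh)

lemma six_mul_abs_le_div_sqrt {x0 : ℝ} (hx0 : 3 / 64 < x0 ^ 2) :
    6 * |x0| ≤ 6 * x0 ^ 2 / √(x0 ^ 2 - 3 / 64) := by
  have hpos : 0 < √(x0 ^ 2 - 3 / 64) := sqrt_pos.2 (by linarith)
  have hle : √(x0 ^ 2 - 3 / 64) ≤ |x0| := by
    rw [← sqrt_sq_eq_abs]; exact sqrt_le_sqrt (by linarith)
  rw [le_div_iff₀ hpos]
  calc 6 * |x0| * √(x0 ^ 2 - 3 / 64) ≤ 6 * |x0| * |x0| := by gcongr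
    _ = 6 * x0 ^ 2 := by rw [mul_assoc, abs_mul_abs_self, sq]

lemma six_le_of_pow_three_eq_two {c t : ℝ} (hc : c ^ 3 = 2) (ht : t ^ 3 ≤ 16 / 27) :
    6 * √(c ^ 4 + 9 * t) ≤ 3 * c ^ 8 := by
  have hcpos : 0 < c := (Odd.pow_pos_iff (n := 3) (by decide)).1 (by rw [hc]; norm_num)
  have h3t : 3 * t ≤ 2 * c := by
    by_contra! hlt; nlinarith [pow_lt_pow_left₀ hlt (by positivity) three_ne_zero]
  have hc4 : c ^ 4 = 2 * c := by rw [pow_succ, hc]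
  have hc8 : c ^ 8 = 4 * c ^ 2 := by rw [show c ^ 8 = (c ^ 4) ^ 2 by ring, hc4]; ring
  rw [hc4, hc8, show 3 * (4 * c ^ 2) = 6 * (2 * c ^ 2) by ring]
  gcongr
  rw [sqrt_le_left (by positivity)]
  nlinarith

lemma six_mul_abs_le_of_sq_le {x0 : ℝ} (hx0 : x0 ^ 2 ≤ 16 / 27) :
    6 * |x0| ≤ 2 ^ ((8 : ℝ) / 3) * 3 * |x0| /
      (2 ^ ((4 : ℝ) / 3) + 9 * |x0| ^ ((2 : ℝ) / 3)) ^ ((1 : ℝ) / 2) := by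
  set c : ℝ := 2 ^ ((1 : ℝ) / 3)
  set t : ℝ := |x0| ^ ((2 : ℝ) / 3)
  have hpow (n : ℕ) : (2 : ℝ) ^ ((n : ℝ) / 3) = c ^ n := by
    rw [← rpow_mul_natCast zero_le_two, one_div_mul_eq_div]
  have hc : c ^ 3 = 2 := by rw [← hpow 3]; norm_num
  have ht3 : t ^ 3 = x0 ^ 2 := by
    rw [← rpow_mul_natCast (abs_nonneg x0)]; norm_num
  have hden : 0 < (c ^ 4 + 9 * t) ^ ((1 : ℝ) / 2) := by positivity
  rw [show (8 : ℝ) / 3 = ((8 : ℕ) : ℝ) / 3 by norm_num,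
    show (4 : ℝ) / 3 = ((4 : ℕ) : ℝ) / 3 by norm_num, hpow, hpow, le_div_iff₀ hden,
    ← sqrt_eq_rpow]
  have hsix := six_le_of_pow_three_eq_two (t := t) hc (ht3 ▸ hx0)
  nlinarith [mul_le_mul_of_nonneg_right hsix (abs_nonneg x0)]

/-- Corollary 4.6 ii: for `x0 < -√3/4` the function
`G₁ = g₁/h`, with `g₁(x) = 3x(2x - 3x0)`, satisfies
`C₇(x0) ≤ G₁(x) ≤ C₈(x0)` on `[2x0, 0]`, where `C₈` depends on whether
`-1/2 < x0 < -√3/4` or `x0 ≤ -1/2`. -/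
theorem G1_bounds_large_x0
    (x0 : ℝ) (hx0 : x0 < -Real.sqrt 3 / 4)
    (g h g1 G1 : ℝ → ℝ)
    (hg : ∀ x : ℝ, g x = (9 * x * (2 * x0 - x) / 4) ^ ((1 : ℝ) / 3))
    (hh : ∀ x : ℝ, h x = ((x - x0) ^ 2 + (4 / 9) * (g x) ^ 4) ^ ((1 : ℝ) / 2))
    (hg1 : ∀ x : ℝ, g1 x = 3 * x * (2 * x - 3 * x0))
    (hG1 : ∀ x : ℝ, G1 x = g1 x / h x)
    (C7 C8 : ℝ)
    (hC7 : C7 = -(3 / 2) ^ 3 * x0 ^ 2 / (x0 ^ 2 - 3 / 64) ^ ((1 : ℝ) / 2))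
    (hC8 : C8 = if -1 / 2 < x0 then
        2 ^ ((8 : ℝ) / 3) * 3 * |x0| /
          (2 ^ ((4 : ℝ) / 3) + 9 * |x0| ^ ((2 : ℝ) / 3)) ^ ((1 : ℝ) / 2)
      else 6 * x0 ^ 2 / (x0 ^ 2 - 3 / 64) ^ ((1 : ℝ) / 2)) :
    ∀ x ∈ Icc (2 * x0) 0, C7 ≤ G1 x ∧ G1 x ≤ C8 := by
  intro x hx
  have hneg : x0 < 0 := by linarith [sqrt_nonneg 3]
  have hsq : 3 / 64 < x0 ^ 2 := by
    nlinarith [sq_sqrt (zero_le_three : (0 : ℝ) ≤ 3), sqrt_nonneg 3]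
  have hhx : h x = √((x - x0) ^ 2 + 4 / 9 * g x ^ 4) := by rw [hh, sqrt_eq_rpow]
  have hm : 0 < √(x0 ^ 2 - 3 / 64) := sqrt_pos.2 (by linarith)
  have hmh : √(x0 ^ 2 - 3 / 64) ≤ h x := hhx ▸ sqrt_le_sqrt
    (sub_le_sq_add_pow_four_of_pow_three_eq (hg x ▸ rpow_one_third_pow_three_of_mem_Icc hx))
  have hpos : 0 < h x := hm.trans_le hmh
  have habs : |x - x0| ≤ h x := by
    rw [hhx, ← sqrt_sq_eq_abs]
    exact sqrt_le_sqrt (le_add_of_nonneg_right (by positivity))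
  have hG1le : G1 x ≤ 6 * |x0| := by
    rw [hG1, hg1, div_le_iff₀ hpos]
    exact (mul_sub_mul_le_of_mem_Icc hx).trans (by gcongr)
  refine ⟨?_, hG1le.trans ?_⟩
  · rw [hG1, hg1, hC7, ← sqrt_eq_rpow]
    exact div_le_div_of_nonpos_of_le_of_le (by nlinarith) hm hmh (neg_le_mul_sub_mul x x0)
  · rw [hC8]
    split_ifs with hcase
    · exact six_mul_abs_le_of_sq_le (by nlinarith)
    · rw [← sqrt_eq_rpow]; exact six_mul_abs_le_div_sqrt hsq
end

section
/- Let x0 < −√3/4 and let G₂(x) = g₂(x)/h(x) for x ∈ [2x0, 0], where g₂(x) = 4(2x − x0) g(x)^{3/2}, h(x) = ((x − x0)^2 + (4/9) g(x)^4)^{1/2} and g(x) = (9x(2x0 − x)/4)^{1/3}. Then C₁₁(x0) ≤ G₂(x) ≤ C₁₂(x0) for every x ∈ [2x0, 0], where C₁₁(x0) = −2^{−7/2} · 3 · (√33 + 3)(15 + √33)^{1/2} x0^2 / (x0^2 − 3/64)^{1/2}, and C₁₂(x0) = 2^{−11/6} · 3 · (√33 − 3)(15 − √33)^{1/2} |x0|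 / (2^{4/3} + 9 |x0|^{2/3})^{1/2} if −1/2 < x0 < −√3/4, while C₁₂(x0) = 2^{−7/2} · 3 · (√33 − 3)(15 − √33)^{1/2} x0^2 / (x0^2 − 3/64)^{1/2} if x0 ≤ −1/2. -/
open Set

lemma aux_mono (u b : ℝ) (hu : 0 ≤ u) (hub : u ≤ b) (hb : b ≤ 3/4) :
    b^4 - b^3 ≤ u^4 - u^3 := by
  have hpsi : b^3 + b^2*u + b*u^2 + u^3 ≤ b^2 + b*u + u^2 := by
    nlinarith [mul_nonneg (by linarith : (0:ℝ) ≤ 1 - b) (by nlinarith : (0:ℝ) ≤ b^2 - u^2),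
      mul_nonneg (by linarith : (0:ℝ) ≤ 1 - b)
        (by nlinarith [mul_nonneg hu (sub_nonneg.2 hub)] : (0:ℝ) ≤ b*u - u^2),
      mul_nonneg (mul_nonneg hu hu) (by linarith : (0:ℝ) ≤ 3/4 - u),
      mul_nonneg (mul_nonneg hu hu) (by linarith : (0:ℝ) ≤ 1 - b)]
  have h2 : 0 ≤ (b - u) * ((b^2 + b*u + u^2) - (b^3 + b^2*u + b*u^2 + u^3)) :=
    mul_nonneg (by linarith) (by linarith)
  nlinarith [h2]

lemma aux_quartic (u : ℝ) : 0 ≤ u^4 - u^3 + 27/256 := by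
  nlinarith [mul_nonneg (sq_nonneg (u - 3/4))
    (by nlinarith [sq_nonneg (u + 1/4)] : (0:ℝ) ≤ u^2 + u/2 + 3/16)]

lemma aux_id1 (x x0 r : ℝ) (hr2 : r^2 = 33) :
    (9:ℝ)/128*(828+132*r)*x0^4 - 36*(2*x-x0)^2*(x*(2*x0-x))
      = 9/256*(8*x-(7+r)*x0)^2*((8*x+(r-5)*x0)^2+4*(r-1)*x0^2) := by
  linear_combination ((-171:ℝ)/256*x0^4 + (-9/32)*x0^4*r + (-9/256)*x0^4*r^2
    + (-9/2)*x*x0^3 + (9/2)*x^2*x0^2) * hr2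

lemma aux_id2 (x x0 r : ℝ) (hr2 : r^2 = 33) :
    (9:ℝ)/128*(828-132*r)*x0^4 - 36*(2*x-x0)^2*(x*(2*x0-x))
      = 9/256*(8*x-(7-r)*x0)^2*(8*(x0-2*x)*((3+r)*x0-4*x)+2*(15-r)*x0^2) := by
  linear_combination ((135:ℝ)/128*x0^4 + (-27/128)*x0^4*r + (-135/16)*x*x0^3
    + (9/16)*x*x0^3*r + (27/4)*x^2*x0^2) * hr2

lemma aux_bound1 (x x0 r : ℝ) (hr2 : r^2 = 33) (hr : 1 ≤ r) :
    36*(2*x-x0)^2*(x*(2*x0-x)) ≤ (9:ℝ)/128*(828+132*r)*x0^4 := by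
  nlinarith [aux_id1 x x0 r hr2,
    mul_nonneg (sq_nonneg (8*x-(7+r)*x0)) (add_nonneg (sq_nonneg (8*x+(r-5)*x0))
      (mul_nonneg (by linarith : (0:ℝ) ≤ 4*(r-1)) (sq_nonneg x0)))]

lemma aux_bound2 (x x0 r : ℝ) (hr2 : r^2 = 33) (hr : 5 ≤ r) (hr6 : r ≤ 6)
    (hx0 : x0 < 0) (hx : 2*x - x0 ≥ 0) :
    36*(2*x-x0)^2*(x*(2*x0-x)) ≤ (9:ℝ)/128*(828-132*r)*x0^4 := by
  have h2 : (3+r)*x0 - 4*x ≤ 0 := by nlinarith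
  nlinarith [aux_id2 x x0 r hr2,
    mul_nonneg (sq_nonneg (8*x-(7-r)*x0)) (add_nonneg
      (by nlinarith : (0:ℝ) ≤ 8*(x0-2*x)*((3+r)*x0-4*x))
      (mul_nonneg (by linarith : (0:ℝ) ≤ 2*(15-r)) (sq_nonneg x0)))]

set_option maxHeartbeats 2000000 in
/-- Corollary 4.8 ii: for `x0 < -√3/4` the function
`G₂ = g₂/h`, with `g₂(x) = 4(2x - x0) g(x)^(3/2)`, satisfies
`C₁₁(x0) ≤ G₂(x) ≤ C₁₂(x0)` on `[2x0, 0]`, where `C₁₂` depends on whether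
`-1/2 < x0 < -√3/4` or `x0 ≤ -1/2`. -/
theorem G2_bounds_large_x0
    (x0 : ℝ) (hx0 : x0 < -Real.sqrt 3 / 4)
    (g h g2 G2 : ℝ → ℝ)
    (hg : ∀ x : ℝ, g x = (9 * x * (2 * x0 - x) / 4) ^ ((1 : ℝ) / 3))
    (hh : ∀ x : ℝ, h x = ((x - x0) ^ 2 + (4 / 9) * (g x) ^ 4) ^ ((1 : ℝ) / 2))
    (hg2 : ∀ x : ℝ, g2 x = 4 * (2 * x - x0) * (g x) ^ ((3 : ℝ) / 2))
    (hG2 : ∀ x : ℝ, G2 x = g2 x / h x)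
    (C11 C12 : ℝ)
    (hC11 : C11 = -(2 : ℝ) ^ (-(7 : ℝ) / 2) * 3 * (Real.sqrt 33 + 3) *
      (15 + Real.sqrt 33) ^ ((1 : ℝ) / 2) * x0 ^ 2 / (x0 ^ 2 - 3 / 64) ^ ((1 : ℝ) / 2))
    (hC12 : C12 = if -1 / 2 < x0 then
        (2 : ℝ) ^ (-(11 : ℝ) / 6) * 3 * (Real.sqrt 33 - 3) *
          (15 - Real.sqrt 33) ^ ((1 : ℝ) / 2) * |x0| /
          (2 ^ ((4 : ℝ) / 3) + 9 * |x0| ^ ((2 : ℝ) / 3)) ^ ((1 : ℝ) / 2)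
      else (2 : ℝ) ^ (-(7 : ℝ) / 2) * 3 * (Real.sqrt 33 - 3) *
          (15 - Real.sqrt 33) ^ ((1 : ℝ) / 2) * x0 ^ 2 /
          (x0 ^ 2 - 3 / 64) ^ ((1 : ℝ) / 2)) :
    ∀ x ∈ Icc (2 * x0) 0, C11 ≤ G2 x ∧ G2 x ≤ C12 := by
  -- basic facts about the constants
  obtain ⟨r, hrdef⟩ : ∃ t : ℝ, t = Real.sqrt 33 := ⟨_, rfl⟩
  rw [← hrdef] at hC11 hC12
  have hr2 : r ^ 2 = 33 := by rw [hrdef]; exact Real.sq_sqrt (by norm_num)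
  have hr0 : 0 ≤ r := hrdef ▸ Real.sqrt_nonneg 33
  have hr5 : 5 < r := by nlinarith
  have hr6 : r < 6 := by nlinarith
  have h3 : Real.sqrt 3 ^ 2 = 3 := Real.sq_sqrt (by norm_num)
  have h3p : 0 ≤ Real.sqrt 3 := Real.sqrt_nonneg 3
  have hx0neg : x0 < 0 := by nlinarith
  have hx0sq : 3/16 < x0^2 := by nlinarith
  have hB2pos : (0:ℝ) < x0^2 - 3/64 := by nlinarith
  -- named constants
  obtain ⟨K2, hK2def⟩ : ∃ t : ℝ, t = (2 : ℝ) ^ (-(7 : ℝ) / 2) := ⟨_, rfl⟩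
  obtain ⟨B, hBdef⟩ : ∃ t : ℝ, t = (x0 ^ 2 - 3 / 64) ^ ((1 : ℝ) / 2) := ⟨_, rfl⟩
  obtain ⟨A, hAdef⟩ : ∃ t : ℝ, t = (15 + r) ^ ((1 : ℝ) / 2) := ⟨_, rfl⟩
  obtain ⟨Am, hAmdef⟩ : ∃ t : ℝ, t = (15 - r) ^ ((1 : ℝ) / 2) := ⟨_, rfl⟩
  rw [← hK2def, ← hBdef, ← hAdef] at hC11
  rw [← hK2def, ← hBdef, ← hAmdef] at hC12
  have hK2pos : 0 < K2 := hK2def ▸ Real.rpow_pos_of_pos (by norm_num) _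
  have hK2sq : K2 ^ 2 = 1 / 128 := by
    rw [hK2def, ← Real.rpow_natCast ((2:ℝ) ^ (-(7:ℝ)/2)) 2,
      ← Real.rpow_mul (by norm_num : (0:ℝ) ≤ 2)]
    rw [show (-(7:ℝ)/2 * ((2:ℕ):ℝ)) = ((-7 : ℤ) : ℝ) by push_cast; ring, Real.rpow_intCast]
    norm_num
  have hBpos : 0 < B := hBdef ▸ Real.rpow_pos_of_pos hB2pos _
  have hBsq : B ^ 2 = x0 ^ 2 - 3/64 := by
    rw [hBdef, ← Real.rpow_natCast ((x0^2-3/64) ^ ((1:ℝ)/2)) 2,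
      ← Real.rpow_mul hB2pos.le]
    norm_num
  have hA0 : 0 ≤ A := hAdef ▸ Real.rpow_nonneg (by linarith) _
  have hAsq : A ^ 2 = 15 + r := by
    rw [hAdef, ← Real.rpow_natCast ((15+r) ^ ((1:ℝ)/2)) 2,
      ← Real.rpow_mul (by linarith : (0:ℝ) ≤ 15 + r)]
    norm_num
  have hAm0 : 0 ≤ Am := hAmdef ▸ Real.rpow_nonneg (by linarith) _
  have hAmsq : Am ^ 2 = 15 - r := by
    rw [hAmdef, ← Real.rpow_natCast ((15-r) ^ ((1:ℝ)/2)) 2,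
      ← Real.rpow_mul (by linarith : (0:ℝ) ≤ 15 - r)]
    norm_num
  intro x hx
  obtain ⟨hx1, hx2⟩ := hx
  -- the basic quantities
  have ha0 : 0 ≤ 9 * x * (2 * x0 - x) / 4 := by
    nlinarith [mul_nonneg (by linarith : (0:ℝ) ≤ -x) (by linarith : (0:ℝ) ≤ x - 2*x0)]
  have hu0 : 0 ≤ g x := by rw [hg]; exact Real.rpow_nonneg ha0 _
  have hu3 : (g x) ^ 3 = 9 * x * (2 * x0 - x) / 4 := by
    rw [hg, ← Real.rpow_natCast ((9*x*(2*x0-x)/4) ^ ((1:ℝ)/3)) 3, ← Real.rpow_mul ha0]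
    norm_num
  obtain ⟨w, hwdef⟩ : ∃ t : ℝ, t = (9 * x * (2 * x0 - x) / 4) ^ ((1 : ℝ) / 2) := ⟨_, rfl⟩
  have hw0 : 0 ≤ w := hwdef ▸ Real.rpow_nonneg ha0 _
  have hw2 : w ^ 2 = 9 * x * (2 * x0 - x) / 4 := by
    rw [hwdef, ← Real.rpow_natCast ((9*x*(2*x0-x)/4) ^ ((1:ℝ)/2)) 2, ← Real.rpow_mul ha0]
    norm_num
  have hg2x : g2 x = 4 * (2 * x - x0) * w := by
    rw [hg2, hg, hwdef, ← Real.rpow_mul ha0]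
    norm_num
  have hg2sq : (g2 x) ^ 2 = 36 * (2*x - x0) ^ 2 * (x * (2*x0 - x)) := by
    have e : (g2 x) ^ 2 = 16 * (2*x - x0) ^ 2 * w ^ 2 := by rw [hg2x]; ring
    rw [e, hw2]; ring
  -- h facts
  have hP : (x - x0) ^ 2 + 4/9 * (g x) ^ 4
      = x0 ^ 2 + 4/9 * ((g x) ^ 4 - (g x) ^ 3) := by
    linear_combination (4/9 : ℝ) * hu3
  have hPb : x0 ^ 2 - 3/64 ≤ (x - x0) ^ 2 + 4/9 * (g x) ^ 4 := by
    rw [hP]; linarith [aux_quartic (g x)]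
  have hPpos : (0:ℝ) < (x - x0) ^ 2 + 4/9 * (g x) ^ 4 := by linarith
  have hhpos : 0 < h x := by rw [hh]; exact Real.rpow_pos_of_pos hPpos _
  have hhsq : (h x) ^ 2 = (x - x0) ^ 2 + 4/9 * (g x) ^ 4 := by
    rw [hh, ← Real.rpow_natCast (((x-x0)^2 + 4/9*(g x)^4) ^ ((1:ℝ)/2)) 2,
      ← Real.rpow_mul hPpos.le]
    norm_num
  have hBh : B ^ 2 ≤ (h x) ^ 2 := by rw [hBsq, hhsq]; exact hPb
  constructor
  · -- lower bound
    rw [hG2, le_div_iff₀ hhpos]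
    have hC11nonpos : C11 ≤ 0 := by
      rw [hC11]
      apply div_nonpos_of_nonpos_of_nonneg
      · have hnum := mul_nonneg (mul_nonneg (mul_nonneg (mul_nonneg hK2pos.le
          (by norm_num : (0:ℝ) ≤ 3)) (by linarith only [hr5] : (0:ℝ) ≤ r + 3)) hA0) (sq_nonneg x0)
        linarith only [hnum]
      · exact hBpos.le
    rcases le_or_gt 0 (g2 x) with hpos | hneg
    · have hm := mul_nonneg (neg_nonneg.2 hC11nonpos) hhpos.le
      have : C11 * h x ≤ 0 := by linarith only [hm]
      linarith only [this, hpos]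
    · have hsq : (g2 x) ^ 2 ≤ (C11 * h x) ^ 2 := by
        have e1 : (C11 * h x) ^ 2 = K2^2 * 9 * (r+3)^2 * A^2 * x0^4 / B^2 * (h x)^2 := by
          rw [hC11]; ring
        have e2 : (r+3)^2 * (15+r) = 828 + 132*r := by linear_combination (r+21) * hr2
        have e3 : (C11 * h x) ^ 2 = (9:ℝ)/128*(828+132*r)*x0^4 * ((h x)^2 / B^2) := by
          rw [e1, hK2sq, hAsq]
          linear_combination (9 * x0^4 * (h x)^2 / (128 * B^2)) * e2
        have hc0 : (0:ℝ) ≤ (9:ℝ)/128*(828+132*r)*x0^4 :=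
          mul_nonneg (mul_nonneg (by norm_num : (0:ℝ) ≤ 9/128)
            (by linarith only [hr0] : (0:ℝ) ≤ 828 + 132*r)) (by positivity)
        have hq : 1 ≤ (h x)^2 / B^2 := (one_le_div (by positivity)).2 hBh
        have h5 := le_mul_of_one_le_right hc0 hq
        have h6 : (g2 x) ^ 2 ≤ (9:ℝ)/128*(828+132*r)*x0^4 := by
          rw [hg2sq]; exact aux_bound1 x x0 r hr2 (by linarith only [hr5])
        rw [e3]; linarith only [h5, h6]
      have hg2' : (0:ℝ) ≤ -(g2 x) := by linarith only [hneg]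
      have hC11h : (0:ℝ) ≤ -(C11 * h x) := by
        have hm := mul_nonneg (neg_nonneg.2 hC11nonpos) hhpos.le
        linarith only [hm]
      have h7 : (-(g2 x)) ^ 2 ≤ (-(C11 * h x)) ^ 2 := by
        rw [neg_pow, neg_pow]; simpa using hsq
      have := (pow_le_pow_iff_left₀ hg2' hC11h (two_ne_zero)).1 h7
      linarith only [this]
  · -- upper bound
    rw [hG2, div_le_iff₀ hhpos]
    have hC12nonneg : 0 ≤ C12 := by
      rw [hC12]
      split_ifs with hbr
      · apply div_nonneg _ (Real.rpow_nonneg (by positivity) _)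
        have h2e : (0:ℝ) ≤ (2:ℝ) ^ (-(11:ℝ)/6) := (Real.rpow_pos_of_pos (by norm_num) _).le
        have hm := mul_nonneg (mul_nonneg (mul_nonneg (mul_nonneg h2e
          (by norm_num : (0:ℝ) ≤ 3)) (by linarith only [hr5] : (0:ℝ) ≤ r - 3)) hAm0) (abs_nonneg x0)
        linarith only [hm]
      · apply div_nonneg _ hBpos.le
        have hm := mul_nonneg (mul_nonneg (mul_nonneg (mul_nonneg hK2pos.le
          (by norm_num : (0:ℝ) ≤ 3)) (by linarith only [hr5] : (0:ℝ) ≤ r - 3)) hAm0) (sq_nonneg x0)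
        linarith only [hm]
    rcases le_or_gt (g2 x) 0 with hneg | hpos
    · have hm := mul_nonneg hC12nonneg hhpos.le
      linarith only [hm, hneg]
    · have h2x : 0 < 2 * x - x0 := by
        by_contra hcon
        push_neg at hcon
        rw [hg2x] at hpos
        have hm := mul_nonneg (by linarith only [hcon] : (0:ℝ) ≤ -(2*x - x0)) hw0
        linarith only [hm, hpos]
      have h6 : (g2 x) ^ 2 ≤ (9:ℝ)/128*(828-132*r)*x0^4 := by
        rw [hg2sq]; exact aux_bound2 x x0 r hr2 (by linarith only [hr5]) (by linarith only [hr6]) hx0neg (by linarith only [h2x])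
      have hsq : (g2 x) ^ 2 ≤ (C12 * h x) ^ 2 := by
        rw [hC12]
        split_ifs with hbr
        · -- branch -1/2 < x0
          obtain ⟨n, hn⟩ : ∃ t : ℝ, t = (2:ℝ) ^ ((1:ℝ)/3) := ⟨_, rfl⟩
          have hnpos : 0 < n := hn ▸ Real.rpow_pos_of_pos (by norm_num) _
          have hn3 : n^3 = 2 := by
            rw [hn, ← Real.rpow_natCast ((2:ℝ)^((1:ℝ)/3)) 3,
              ← Real.rpow_mul (by norm_num : (0:ℝ) ≤ 2)]
            norm_num
          obtain ⟨m, hm⟩ : ∃ t : ℝ, t = |x0| ^ ((1:ℝ)/3) := ⟨_, rfl⟩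
          have habs : 0 < |x0| := abs_pos.2 (ne_of_lt hx0neg)
          have hmpos : 0 < m := hm ▸ Real.rpow_pos_of_pos habs _
          have hm3 : m^3 = |x0| := by
            rw [hm, ← Real.rpow_natCast (|x0| ^ ((1:ℝ)/3)) 3, ← Real.rpow_mul habs.le]
            norm_num
          have hm3' : m^3 = -x0 := by rw [hm3, abs_of_neg hx0neg]
          have hx0m : x0^2 = m^6 := by
            rw [show (m:ℝ)^6 = (m^3)^2 by ring, hm3']; ring
          have h24 : (2:ℝ) ^ ((4:ℝ)/3) = 2*n := by
            rw [hn, show ((4:ℝ)/3) = 1 + 1/3 by norm_num,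
              Real.rpow_add (by norm_num : (0:ℝ) < 2), Real.rpow_one]
          have h23 : |x0| ^ ((2:ℝ)/3) = m^2 := by
            rw [hm, ← Real.rpow_natCast (|x0| ^ ((1:ℝ)/3)) 2, ← Real.rpow_mul habs.le]
            norm_num
          have hEinpos : (0:ℝ) < 2 ^ ((4:ℝ)/3) + 9 * |x0| ^ ((2:ℝ)/3) := by
            rw [h24, h23]; positivity
          obtain ⟨E, hE⟩ : ∃ t : ℝ,
              t = (2 ^ ((4:ℝ)/3) + 9 * |x0| ^ ((2:ℝ)/3)) ^ ((1:ℝ)/2) := ⟨_, rfl⟩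
          obtain ⟨Q, hQ⟩ : ∃ t : ℝ, t = (2:ℝ) ^ (-(11:ℝ)/6) := ⟨_, rfl⟩
          rw [← hE, ← hQ]
          have hEpos : 0 < E := hE ▸ Real.rpow_pos_of_pos hEinpos _
          have hEsq : E^2 = 2*n + 9*m^2 := by
            rw [hE, ← Real.rpow_natCast ((2 ^ ((4:ℝ)/3) + 9 * |x0| ^ ((2:ℝ)/3)) ^ ((1:ℝ)/2)) 2,
              ← Real.rpow_mul hEinpos.le]
            rw [show ((1:ℝ)/2 * ((2:ℕ):ℝ)) = 1 by push_cast; norm_num, Real.rpow_one, h24, h23]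
          have hQsq : Q^2 = n/16 := by
            rw [hQ, hn, ← Real.rpow_natCast ((2:ℝ)^(-(11:ℝ)/6)) 2,
              ← Real.rpow_mul (by norm_num : (0:ℝ) ≤ 2)]
            rw [show (-(11:ℝ)/6 * ((2:ℕ):ℝ)) = (1:ℝ)/3 + (-4) by push_cast; norm_num,
              Real.rpow_add (by norm_num : (0:ℝ) < 2)]
            rw [show ((-4):ℝ) = ((-4:ℤ):ℝ) by push_cast; norm_num, Real.rpow_intCast]
            norm_num
            ring
          -- the constraint u ≤ 3 m^2 / (2 n) ≤ 3/4
          have hf1 : (0:ℝ) ≤ x - x0/2 := by linarith only [h2x]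
          have hf2 : (0:ℝ) ≤ x - 3*x0/2 := by linarith only [h2x, hx0neg]
          have hf3 := mul_nonneg hf1 hf2
          have hub3' : (g x)^3 ≤ 27*m^6/16 := by
            rw [hu3]; rw [← hx0m]; linarith only [hf3]
          have hrhs3 : (3*m^2/(2*n))^3 = 27*m^6/16 := by
            rw [div_pow, show ((2:ℝ)*n)^3 = 8*(n^3) by ring, hn3,
              show ((3:ℝ)*m^2)^3 = 27*m^6 by ring]
            norm_num
          have hub : g x ≤ 3*m^2/(2*n) := by
            have h30 : (0:ℝ) ≤ 3*m^2/(2*n) := by positivity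
            exact (pow_le_pow_iff_left₀ hu0 h30 (by norm_num : (3:ℕ) ≠ 0)).1
              (by rw [hrhs3]; exact hub3')
          have hmn : m*n ≤ 1 := by
            have h1 : (m*n)^3 ≤ 1^3 := by
              rw [show ((m:ℝ)*n)^3 = m^3*n^3 by ring, hm3', hn3, one_pow]
              linarith only [hbr]
            exact (pow_le_pow_iff_left₀ (by positivity) zero_le_one (by norm_num : (3:ℕ) ≠ 0)).1 h1
          have hm2n : 2*m^2 ≤ n := by
            have h1 : m^2*n^2 ≤ 1 := by
              linarith only [mul_nonneg (mul_nonneg hmpos.le hnpos.le) (sub_nonneg.2 hmn), hmn]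
            have h2 := mul_nonneg hnpos.le (sub_nonneg.2 h1)
            have h3 : m^2*n^3 = m^2*2 := by rw [hn3]
            linarith only [h2, h3]
          have hub34 : 3*m^2/(2*n) ≤ 3/4 := by
            rw [div_le_iff₀ (by positivity : (0:ℝ) < 2*n)]
            linarith only [hm2n]
          have hmono := aux_mono (g x) (3*m^2/(2*n)) hu0 hub hub34
          have hb4 : (3*m^2/(2*n))^4 = 81*m^8/(32*n) := by
            rw [div_pow, show ((2:ℝ)*n)^4 = 16*(n^3)*n by ring, hn3,
              show ((3:ℝ)*m^2)^4 = 81*m^8 by ring]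
            ring
          have hkey : 32*n/9*((3*m^2/(2*n))^4 - (3*m^2/(2*n))^3) = 9*m^8 - 6*n*m^6 := by
            rw [hb4, hrhs3]
            field_simp
            ring
          have hmono' : 32*n/9*((3*m^2/(2*n))^4 - (3*m^2/(2*n))^3)
              ≤ 32*n/9*((g x)^4 - (g x)^3) :=
            mul_le_mul_of_nonneg_left hmono (by positivity)
          have hD : 2*n*m^6 + 9*m^8 ≤ 8*n*((x - x0)^2 + 4/9*(g x)^4) := by
            rw [hP, hx0m]
            linarith only [hmono', hkey]
          -- assemble
          have e1 : ((Q * 3 * (r-3) * Am * |x0| / E) * h x)^2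
              = Q^2*9*(r-3)^2*Am^2*|x0|^2*(h x)^2/E^2 := by ring
          have e2 : (r-3)^2*(15-r) = 828 - 132*r := by linear_combination (21-r)*hr2
          have habs2 : |x0|^2 = m^6 := by
            rw [show (m:ℝ)^6 = (m^3)^2 by ring, hm3]
          have e3 : ((Q * 3 * (r-3) * Am * |x0| / E) * h x)^2
              = 9*n/16*(828-132*r)*m^6*(h x)^2/E^2 := by
            rw [e1, hQsq, hAmsq, habs2]
            linear_combination (9*n*m^6*(h x)^2/(16*E^2)) * e2
          rw [e3, le_div_iff₀ (by positivity : (0:ℝ) < E^2), hEsq, hhsq]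
          have s1 : (g2 x)^2*(2*n+9*m^2) ≤ ((9:ℝ)/128*(828-132*r)*x0^4)*(2*n+9*m^2) :=
            mul_le_mul_of_nonneg_right h6 (by positivity)
          have s2 : ((9:ℝ)/128*(828-132*r)*x0^4)*(2*n+9*m^2)
              = ((9:ℝ)/128*(828-132*r)*m^6)*(2*n*m^6+9*m^8) := by
            rw [show (x0:ℝ)^4 = (x0^2)^2 by ring, hx0m]; ring
          have hcoeff : (0:ℝ) ≤ (9:ℝ)/128*(828-132*r)*m^6 :=
            mul_nonneg (mul_nonneg (by norm_num : (0:ℝ) ≤ 9/128)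
              (by linarith only [hr6] : (0:ℝ) ≤ 828 - 132*r)) (by positivity)
          have s3 : ((9:ℝ)/128*(828-132*r)*m^6)*(2*n*m^6+9*m^8)
              ≤ ((9:ℝ)/128*(828-132*r)*m^6)*(8*n*((x - x0)^2 + 4/9*(g x)^4)) :=
            mul_le_mul_of_nonneg_left hD hcoeff
          have s4 : ((9:ℝ)/128*(828-132*r)*m^6)*(8*n*((x - x0)^2 + 4/9*(g x)^4))
              = 9*n/16*(828-132*r)*m^6*((x - x0)^2 + 4/9*(g x)^4) := by ring
          linarith only [s1, s2, s3, s4]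
        · -- branch x0 ≤ -1/2
          have e1 : ((K2 * 3 * (r - 3) * Am * x0 ^ 2 / B) * h x) ^ 2
              = K2^2 * 9 * (r-3)^2 * Am^2 * x0^4 / B^2 * (h x)^2 := by
            ring
          have e2 : (r-3)^2 * (15-r) = 828 - 132*r := by linear_combination (21-r) * hr2
          have e3 : ((K2 * 3 * (r - 3) * Am * x0 ^ 2 / B) * h x) ^ 2
              = (9:ℝ)/128*(828-132*r)*x0^4 * ((h x)^2 / B^2) := by
            rw [e1, hK2sq, hAmsq]
            linear_combination (9 * x0^4 * (h x)^2 / (128 * B^2)) * e2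
          have hc0 : (0:ℝ) ≤ (9:ℝ)/128*(828-132*r)*x0^4 :=
            mul_nonneg (mul_nonneg (by norm_num : (0:ℝ) ≤ 9/128)
              (by linarith only [hr6] : (0:ℝ) ≤ 828 - 132*r)) (by positivity)
          have hq : 1 ≤ (h x)^2 / B^2 := (one_le_div (by positivity)).2 hBh
          have h5 := le_mul_of_one_le_right hc0 hq
          rw [e3]; linarith only [h5, h6]
      have hC12h : 0 ≤ C12 * h x := mul_nonneg hC12nonneg hhpos.le
      exact (pow_le_pow_iff_left₀ hpos.le hC12h (two_ne_zero)).1 hsq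
end

section
/- Let x0 < 0 and let G₂(x) = g₂(x)/h(x) for x ∈ [2x0, 0], where g₂(x) = 4(2x − x0) g(x)^{3/2}, h(x) = ((x − x0)^2 + (4/9) g(x)^4)^{1/2} and g(x) = (9x(2x0 − x)/4)^{1/3}. Then |G₂(x)| ≤ C₁₃(x0) for every x ∈ [2x0, 0], where C₁₃(x0) = 2^{−19/6} · 3^{2/3} · (√33 + 3)(15 + √33)^{1/2} |x0|^{2/3} if −√3/4 ≤ x0 < 0, and C₁₃(x0) = 2^{−7/2} · 3 · (√33 + 3)(15 + √33)^{1/2} x0^2 / (x0^2 − 3/64)^{1/2} if x0 < −√3/4. -/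
/-!
Write `q = x (2 x0 - x) ∈ [0, x0²]` and `u = g(x)`, so that `u³ = 9q/4`. Then
`g₂² = 36 (2x - x0)² q`, which is at most `(9/128)(√33 + 3)²(15 + √33) x0⁴` by a quartic
inequality, and `h² = x0² + (4/9)(u⁴ - u³)`. The quartic `u⁴ - u³` has its minimum
`-27/256` at `u = 3/4`, which gives `h² ≥ x0² - 3/64`. When `x0² ≤ 3/16`, the range
`[0, g(x0)]` of `u` lies in `[0, 3/4]`, where `u⁴ - u³` decreases, so `h` is smallest at
`x = x0` and `h² ≥ (4/9) g(x0)⁴`.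
-/

open Set Real

lemma rpow_pow_of_mul_eq_intCast {a e : ℝ} {n : ℕ} {k : ℤ} (ha : 0 ≤ a) (h : e * n = k) :
    (a ^ e) ^ n = a ^ k := by
  rw [← rpow_mul_natCast ha, h, rpow_intCast]

lemma rpow_one_half_sq {a : ℝ} (ha : 0 ≤ a) : (a ^ ((1 : ℝ) / 2)) ^ 2 = a := by
  rw [← sqrt_eq_rpow, sq_sqrt ha]

lemma abs_div_le_of_sq_le_mul_sq {a b c : ℝ} (hb : 0 ≤ b) (hc : 0 ≤ c)
    (h : a ^ 2 ≤ c ^ 2 * b ^ 2) : |a / b| ≤ c := by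
  rcases hb.eq_or_lt with rfl | hb
  · simpa using hc
  rw [abs_div, abs_of_pos hb, div_le_iff₀ hb]
  exact abs_le_of_sq_le_sq (by rwa [mul_pow]) (by positivity)

-- Equality holds at `x = (7 + √33) y / 8`.
lemma sq_two_mul_sub_mul_le (x y : ℝ) :
    (2 * x - y) ^ 2 * (x * (2 * y - x)) ≤ (√33 + 3) ^ 2 * (15 + √33) / 512 * y ^ 4 := by
  have hr : √33 ^ 2 = 33 := sq_sqrt (by norm_num)
  have hr1 : 1 ≤ √33 := by nlinarith [sqrt_nonneg 33]
  have key : (√33 + 3) ^ 2 * (15 + √33) / 512 * y ^ 4 - (2 * x - y) ^ 2 * (x * (2 * y - x))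
      = 4 * (x - (7 + √33) / 8 * y) ^ 2
          * ((x + (√33 - 5) / 8 * y) ^ 2 + (√33 - 1) / 16 * y ^ 2) := by
    linear_combination ((23 - 6 * √33 - √33 ^ 2) * y ^ 4 / 1024 + x ^ 2 * y ^ 2 / 8
      - x * y ^ 3 / 8) * hr
  have hsq : 0 ≤ 4 * (x - (7 + √33) / 8 * y) ^ 2
      * ((x + (√33 - 5) / 8 * y) ^ 2 + (√33 - 1) / 16 * y ^ 2) := by
    have : 0 ≤ (√33 - 1) / 16 := by linarith
    positivity
  linarith

-- `u⁴ - u³ + 27/256 = (4u - 3)² (16u² + 8u + 3) / 256`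
lemma pow_four_sub_pow_three_ge (u : ℝ) : -27 / 256 ≤ u ^ 4 - u ^ 3 := by
  have hquad : 0 ≤ 16 * u ^ 2 + 8 * u + 3 := by nlinarith [sq_nonneg (4 * u + 1)]
  nlinarith [mul_nonneg (sq_nonneg (4 * u - 3)) hquad]

lemma antitoneOn_pow_four_sub_pow_three :
    AntitoneOn (fun u : ℝ ↦ u ^ 4 - u ^ 3) (Icc 0 (3 / 4)) := by
  rintro u ⟨hu0, hu1⟩ v ⟨hv0, hv1⟩ huv
  have hd := sub_nonneg.2 huv
  nlinarith [mul_nonneg hd hu0, mul_nonneg hd (mul_nonneg hu0 hu0),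
    mul_nonneg hd (mul_nonneg hu0 hv0), mul_nonneg hd (mul_nonneg hv0 hv0),
    mul_nonneg (mul_nonneg hd (sub_nonneg.2 hv1)) (mul_nonneg hv0 hv0),
    mul_nonneg (mul_nonneg hd (sub_nonneg.2 hu1)) (mul_nonneg hu0 hu0),
    mul_nonneg (mul_nonneg hd (sub_nonneg.2 hv1)) (mul_nonneg hu0 hv0)]

noncomputable def C13Small (x0 : ℝ) : ℝ :=
  2 ^ (-(19 : ℝ) / 6) * 3 ^ ((2 : ℝ) / 3) * (√33 + 3) * (15 + √33) ^ ((1 : ℝ) / 2)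
    * |x0| ^ ((2 : ℝ) / 3)

noncomputable def C13Large (x0 : ℝ) : ℝ :=
  2 ^ (-(7 : ℝ) / 2) * 3 * (√33 + 3) * (15 + √33) ^ ((1 : ℝ) / 2) * x0 ^ 2
    / (x0 ^ 2 - 3 / 64) ^ ((1 : ℝ) / 2)

lemma C13Small_nonneg (x0 : ℝ) : 0 ≤ C13Small x0 := by
  unfold C13Small; positivity

lemma C13Large_nonneg {x0 : ℝ} (hgap : 0 ≤ x0 ^ 2 - 3 / 64) : 0 ≤ C13Large x0 := by
  have := rpow_nonneg hgap ((1 : ℝ) / 2)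
  unfold C13Large; positivity

lemma sq_C13Small_mul {x0 U : ℝ} (hU : U ^ 3 = 9 * x0 ^ 2 / 4) :
    C13Small x0 ^ 2 * (4 / 9 * U ^ 4) = 9 / 128 * ((√33 + 3) ^ 2 * (15 + √33)) * x0 ^ 4 := by
  set V := 2 ^ (-(19 : ℝ) / 6) * 3 ^ ((2 : ℝ) / 3) * |x0| ^ ((2 : ℝ) / 3) with hVdef
  have hV6 : V ^ 6 = 3 ^ 4 * x0 ^ 4 / 2 ^ 19 := by
    rw [hVdef, mul_pow, mul_pow, rpow_pow_of_mul_eq_intCast (k := -19) (by norm_num) (by norm_num),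
      rpow_pow_of_mul_eq_intCast (k := 4) (by norm_num) (by norm_num),
      rpow_pow_of_mul_eq_intCast (k := 4) (abs_nonneg x0) (by norm_num), zpow_neg,
      zpow_ofNat, zpow_ofNat, zpow_ofNat, pow_abs, abs_of_nonneg (by positivity)]
    ring
  have hVU : V ^ 2 * U ^ 4 = 81 / 512 * x0 ^ 4 := by
    refine (pow_left_inj₀ (by positivity) (by positivity) three_ne_zero).1 ?_
    calc _ = V ^ 6 * (U ^ 3) ^ 4 := by ring
      _ = _ := by rw [hV6, hU]; ring
  have hC : C13Small x0 = V * (√33 + 3) * (15 + √33) ^ ((1 : ℝ) / 2) := by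
    rw [C13Small, hVdef]; ring
  rw [hC, mul_pow, mul_pow, rpow_one_half_sq (by positivity)]
  linear_combination (4 / 9 * (√33 + 3) ^ 2 * (15 + √33)) * hVU

lemma sq_C13Large_mul {x0 : ℝ} (hgap : 0 < x0 ^ 2 - 3 / 64) :
    C13Large x0 ^ 2 * (x0 ^ 2 - 3 / 64) = 9 / 128 * ((√33 + 3) ^ 2 * (15 + √33)) * x0 ^ 4 := by
  have htwo : ((2 : ℝ) ^ (-(7 : ℝ) / 2)) ^ 2 = 1 / 128 := by
    rw [rpow_pow_of_mul_eq_intCast (k := -7) (by norm_num) (by norm_num)]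
    norm_num
  rw [C13Large, div_pow, rpow_one_half_sq hgap.le, div_mul_cancel₀ _ hgap.ne', mul_pow, mul_pow,
    mul_pow, mul_pow, htwo, rpow_one_half_sq (by positivity)]
  ring

section Tricomi

variable {x0 x : ℝ} {g h g2 : ℝ → ℝ}

lemma tricomi_g_nonneg_and_cube
    (hg : ∀ x : ℝ, g x = (9 * x * (2 * x0 - x) / 4) ^ ((1 : ℝ) / 3))
    (hx : x ∈ Icc (2 * x0) 0) : 0 ≤ g x ∧ g x ^ 3 = 9 * x * (2 * x0 - x) / 4 := by
  have hq : 0 ≤ 9 * x * (2 * x0 - x) / 4 := by nlinarith [hx.1, hx.2]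
  rw [hg]
  refine ⟨rpow_nonneg hq _, ?_⟩
  rw [rpow_pow_of_mul_eq_intCast (k := 1) hq (by norm_num), zpow_one]

lemma tricomi_h_sq (hg : ∀ x : ℝ, g x = (9 * x * (2 * x0 - x) / 4) ^ ((1 : ℝ) / 3))
    (hh : ∀ x : ℝ, h x = ((x - x0) ^ 2 + (4 / 9) * (g x) ^ 4) ^ ((1 : ℝ) / 2))
    (hx : x ∈ Icc (2 * x0) 0) : h x ^ 2 = x0 ^ 2 + 4 / 9 * (g x ^ 4 - g x ^ 3) := by
  have hcube := (tricomi_g_nonneg_and_cube hg hx).2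
  rw [hh, rpow_one_half_sq (by positivity)]
  linear_combination (4 / 9 : ℝ) * hcube

lemma tricomi_g2_sq_le (hg : ∀ x : ℝ, g x = (9 * x * (2 * x0 - x) / 4) ^ ((1 : ℝ) / 3))
    (hg2 : ∀ x : ℝ, g2 x = 4 * (2 * x - x0) * (g x) ^ ((3 : ℝ) / 2))
    (hx : x ∈ Icc (2 * x0) 0) :
    g2 x ^ 2 ≤ 9 / 128 * ((√33 + 3) ^ 2 * (15 + √33)) * x0 ^ 4 := by
  obtain ⟨hg0, hcube⟩ := tricomi_g_nonneg_and_cube hg hx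
  have hsq : g2 x ^ 2 = 36 * ((2 * x - x0) ^ 2 * (x * (2 * x0 - x))) := by
    rw [hg2, mul_pow, rpow_pow_of_mul_eq_intCast (k := 3) hg0 (by norm_num), zpow_ofNat, hcube]
    ring
  linarith [sq_two_mul_sub_mul_le x x0]

lemma tricomi_h_sq_ge_sub (hg : ∀ x : ℝ, g x = (9 * x * (2 * x0 - x) / 4) ^ ((1 : ℝ) / 3))
    (hh : ∀ x : ℝ, h x = ((x - x0) ^ 2 + (4 / 9) * (g x) ^ 4) ^ ((1 : ℝ) / 2))
    (hx : x ∈ Icc (2 * x0) 0) : x0 ^ 2 - 3 / 64 ≤ h x ^ 2 := by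
  rw [tricomi_h_sq hg hh hx]
  linarith [pow_four_sub_pow_three_ge (g x)]

lemma tricomi_h_sq_ge_of_sq_le
    (hg : ∀ x : ℝ, g x = (9 * x * (2 * x0 - x) / 4) ^ ((1 : ℝ) / 3))
    (hh : ∀ x : ℝ, h x = ((x - x0) ^ 2 + (4 / 9) * (g x) ^ 4) ^ ((1 : ℝ) / 2))
    (hx : x ∈ Icc (2 * x0) 0) (hsmall : x0 ^ 2 ≤ 3 / 16) : 4 / 9 * g x0 ^ 4 ≤ h x ^ 2 := by
  have hx0 : x0 ∈ Icc (2 * x0) 0 := ⟨by linarith [hx.1, hx.2], by linarith [hx.1, hx.2]⟩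
  obtain ⟨hu0, hu⟩ := tricomi_g_nonneg_and_cube hg hx
  obtain ⟨hU0, hU⟩ := tricomi_g_nonneg_and_cube hg hx0
  have hU1 : g x0 ≤ 3 / 4 :=
    (pow_le_pow_iff_left₀ hU0 (by norm_num) three_ne_zero).1 (by nlinarith)
  have huU : g x ≤ g x0 :=
    (pow_le_pow_iff_left₀ hu0 hU0 three_ne_zero).1 (by nlinarith [sq_nonneg (x - x0)])
  have hmono : g x0 ^ 4 - g x0 ^ 3 ≤ g x ^ 4 - g x ^ 3 :=
    antitoneOn_pow_four_sub_pow_three ⟨hu0, huU.trans hU1⟩ ⟨hU0, hU1⟩ huU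
  rw [tricomi_h_sq hg hh hx]
  nlinarith

end Tricomi

theorem G2_abs_bound_general
    (x0 : ℝ)
    (g h g2 G2 : ℝ → ℝ)
    (hg : ∀ x : ℝ, g x = (9 * x * (2 * x0 - x) / 4) ^ ((1 : ℝ) / 3))
    (hh : ∀ x : ℝ, h x = ((x - x0) ^ 2 + (4 / 9) * (g x) ^ 4) ^ ((1 : ℝ) / 2))
    (hg2 : ∀ x : ℝ, g2 x = 4 * (2 * x - x0) * (g x) ^ ((3 : ℝ) / 2))
    (hG2 : ∀ x : ℝ, G2 x = g2 x / h x)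
    (C13 : ℝ)
    (hC13 : C13 = if -Real.sqrt 3 / 4 ≤ x0 then
        (2 : ℝ) ^ (-(19 : ℝ) / 6) * 3 ^ ((2 : ℝ) / 3) * (Real.sqrt 33 + 3) *
          (15 + Real.sqrt 33) ^ ((1 : ℝ) / 2) * |x0| ^ ((2 : ℝ) / 3)
      else (2 : ℝ) ^ (-(7 : ℝ) / 2) * 3 * (Real.sqrt 33 + 3) *
          (15 + Real.sqrt 33) ^ ((1 : ℝ) / 2) * x0 ^ 2 /
          (x0 ^ 2 - 3 / 64) ^ ((1 : ℝ) / 2)) :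
    ∀ x ∈ Icc (2 * x0) 0, |G2 x| ≤ C13 := by
  intro x hx
  have hx0 : x0 ≤ 0 := by linarith [hx.1, hx.2]
  have hsqrt3 : √3 ^ 2 = 3 := sq_sqrt (by norm_num)
  have hh0 : 0 ≤ h x := by rw [hh]; positivity
  have hnum := tricomi_g2_sq_le hg hg2 hx
  rw [hG2, hC13]
  split_ifs with hc
  · have hsmall : x0 ^ 2 ≤ 3 / 16 := by nlinarith
    obtain ⟨-, hU⟩ := tricomi_g_nonneg_and_cube hg (x := x0) ⟨by linarith, hx0⟩
    refine abs_div_le_of_sq_le_mul_sq (c := C13Small x0) hh0 (C13Small_nonneg x0) ?_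
    calc g2 x ^ 2 ≤ _ := hnum
      _ = C13Small x0 ^ 2 * (4 / 9 * g x0 ^ 4) := (sq_C13Small_mul (by rw [hU]; ring)).symm
      _ ≤ _ := by gcongr; exact tricomi_h_sq_ge_of_sq_le hg hh hx hsmall
  · have hgap : 0 < x0 ^ 2 - 3 / 64 := by nlinarith [sqrt_nonneg 3]
    refine abs_div_le_of_sq_le_mul_sq (c := C13Large x0) hh0 (C13Large_nonneg hgap.le) ?_
    calc g2 x ^ 2 ≤ _ := hnum
      _ = C13Large x0 ^ 2 * (x0 ^ 2 - 3 / 64) := (sq_C13Large_mul hgap).symm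
      _ ≤ _ := by gcongr; exact tricomi_h_sq_ge_sub hg hh hx

/-- Corollary 4.8, inequality (4.38): for every `x0 < 0`
the function `G₂ = g₂/h` satisfies `|G₂(x)| ≤ C₁₃(x0)` on `[2x0, 0]`, where
`C₁₃` takes different explicit values according to whether `-√3/4 ≤ x0 < 0`
or `x0 < -√3/4`. -/
theorem G2_abs_bound
    (x0 : ℝ) (hx0 : x0 < 0)
    (g h g2 G2 : ℝ → ℝ)
    (hg : ∀ x : ℝ, g x = (9 * x * (2 * x0 - x) / 4) ^ ((1 : ℝ) / 3))
    (hh : ∀ x : ℝ, h x = ((x - x0) ^ 2 + (4 / 9) * (g x) ^ 4) ^ ((1 : ℝ) / 2))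
    (hg2 : ∀ x : ℝ, g2 x = 4 * (2 * x - x0) * (g x) ^ ((3 : ℝ) / 2))
    (hG2 : ∀ x : ℝ, G2 x = g2 x / h x)
    (C13 : ℝ)
    (hC13 : C13 = if -Real.sqrt 3 / 4 ≤ x0 then
        (2 : ℝ) ^ (-(19 : ℝ) / 6) * 3 ^ ((2 : ℝ) / 3) * (Real.sqrt 33 + 3) *
          (15 + Real.sqrt 33) ^ ((1 : ℝ) / 2) * |x0| ^ ((2 : ℝ) / 3)
      else (2 : ℝ) ^ (-(7 : ℝ) / 2) * 3 * (Real.sqrt 33 + 3) *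
          (15 + Real.sqrt 33) ^ ((1 : ℝ) / 2) * x0 ^ 2 /
          (x0 ^ 2 - 3 / 64) ^ ((1 : ℝ) / 2)) :
    ∀ x ∈ Icc (2 * x0) 0, |G2 x| ≤ C13 :=
  G2_abs_bound_general x0 g h g2 G2 hg hh hg2 hG2 C13 hC13
end
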